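/- arXiv:2212.09224 — 6 statements merged into one kernel-verified Lean document; each statement's English description precedes it below -/
import Mathlib

section
/- Let X₁ and X₂ be CL-spaces with localic parts Y₁ and Y₂, and let f : X₁ → X₂ be an L-morphism. Then f is a proper L-morphism if and only if the restriction g : Y₁ → Y₂ of f is a proper map, i.e. g is continuous, ↓g(A) is closed in Y₂ for every closed A ⊆ Y₁ (↓ taken in the specialization order of Y₂), and g⁻¹(B) is compact for every compact saturated B ⊆ Y₂. -/
open Set Topology

/-- An L-space: a Priestley space (compact, Priestley separation) that is an
Esakia space (downward closure of clopens is clopen) and extremally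
order-disconnected (closure of open upper sets is open). -/
structure IsLSpace (X : Type*) [TopologicalSpace X] [PartialOrder X] : Prop where
  compact : CompactSpace X
  priestley : ∀ x y : X, ¬ x ≤ y →
    ∃ U : Set X, IsClopen U ∧ IsUpperSet U ∧ x ∈ U ∧ y ∉ U
  esakia : ∀ U : Set X, IsClopen U → IsClopen (lowerClosure U : Set X)
  eod : ∀ U : Set X, IsOpen U → IsUpperSet U → IsOpen (closure U)

/-- The localic part of an L-space: points whose down-set is clopen. -/
def localicPart (X : Type*) [TopologicalSpace X] [PartialOrder X] : Set X :=
  {y : X | IsClopen (Set.Iic y)}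

/-- An L-morphism: a continuous order-preserving map such that
`f ⁻¹' (closure U) = closure (f ⁻¹' U)` for every open upper set `U`. -/
def IsLMorphism {X₁ X₂ : Type*} [TopologicalSpace X₁] [PartialOrder X₁]
    [TopologicalSpace X₂] [PartialOrder X₂] (f : X₁ → X₂) : Prop :=
  Continuous f ∧ Monotone f ∧
    ∀ U : Set X₂, IsOpen U → IsUpperSet U → f ⁻¹' closure U = closure (f ⁻¹' U)

/-- `V ≪ U`: for every open upper set `W`, `U ⊆ closure W` implies `V ⊆ W`. -/
def WayBelowSet {X : Type*} [TopologicalSpace X] [PartialOrder X]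
    (V U : Set X) : Prop :=
  ∀ W : Set X, IsOpen W → IsUpperSet W → U ⊆ closure W → V ⊆ W

/-- The kernel of a clopen upper set `U`: the union of all clopen upper sets
way below `U`. -/
def kernelSet {X : Type*} [TopologicalSpace X] [PartialOrder X] (U : Set X) : Set X :=
  ⋃₀ {V : Set X | IsClopen V ∧ IsUpperSet V ∧ WayBelowSet V U}

/-- A CL-space: an L-space in which every clopen upper set `U` is packed,
i.e. `ker U` is dense in `U`. -/
def IsCLSpace (X : Type*) [TopologicalSpace X] [PartialOrder X] : Prop :=
  IsLSpace X ∧ ∀ U : Set X, IsClopen U → IsUpperSet U → U ⊆ closure (kernelSet U)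

/-- A Scott upset: a closed upper set all of whose minimal elements lie in the
localic part. -/
def IsScottUpset {X : Type*} [TopologicalSpace X] [PartialOrder X] (F : Set X) : Prop :=
  IsClosed F ∧ IsUpperSet F ∧
    ∀ x ∈ F, (∀ y ∈ F, y ≤ x → y = x) → x ∈ localicPart X

/-- A proper L-morphism: an L-morphism with `f ⁻¹' (ker U) ⊆ ker (f ⁻¹' U)`
for every clopen upper set `U`. -/
def IsProperLMorphism {X₁ X₂ : Type*} [TopologicalSpace X₁] [PartialOrder X₁]
    [TopologicalSpace X₂] [PartialOrder X₂] (f : X₁ → X₂) : Prop :=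
  IsLMorphism f ∧ ∀ U : Set X₂, IsClopen U → IsUpperSet U →
    f ⁻¹' kernelSet U ⊆ kernelSet (f ⁻¹' U)

/-- Kernel-stability: `ker U ∩ ker V = ker (U ∩ V)` for clopen upper sets. -/
def KernelStable (X : Type*) [TopologicalSpace X] [PartialOrder X] : Prop :=
  ∀ U V : Set X, IsClopen U → IsUpperSet U → IsClopen V → IsUpperSet V →
    kernelSet U ∩ kernelSet V = kernelSet (U ∩ V)

/-- Scott-stability: the intersection of two Scott upsets is a Scott upset. -/
def ScottStable (X : Type*) [TopologicalSpace X] [PartialOrder X] : Prop :=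
  ∀ F G : Set X, IsScottUpset F → IsScottUpset G → IsScottUpset (F ∩ G)

/-- L-compactness: every minimal element of `X` lies in the localic part. -/
def IsLCompact (X : Type*) [TopologicalSpace X] [PartialOrder X] : Prop :=
  ∀ x : X, (∀ y : X, y ≤ x → y = x) → x ∈ localicPart X

/-- The regular part of a clopen upper set `U`: the union of all clopen upper
sets `V` with `↓V ⊆ U`. -/
def regPart {X : Type*} [TopologicalSpace X] [PartialOrder X] (U : Set X) : Set X :=
  ⋃₀ {V : Set X | IsClopen V ∧ IsUpperSet V ∧ (lowerClosure V : Set X) ⊆ U}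

/-- L-regularity: every clopen upper set `U` satisfies `U ⊆ closure (reg U)`. -/
def IsLRegular (X : Type*) [TopologicalSpace X] [PartialOrder X] : Prop :=
  ∀ U : Set X, IsClopen U → IsUpperSet U → U ⊆ closure (regPart U)

section Basic
variable {X : Type*} [TopologicalSpace X] [PartialOrder X]

lemma isClosed_Iic_of (hX : IsLSpace X) (m : X) : IsClosed (Iic m) := by
  rw [← isOpen_compl_iff]
  rw [isOpen_iff_forall_mem_open]
  intro y hy
  obtain ⟨U, hU, hUu, hyU, hmU⟩ := hX.priestley y m hy
  exact ⟨U, fun z hz hzm => hmU (hUu hzm hz), hU.isOpen, hyU⟩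

lemma isClosed_Ici_of (hX : IsLSpace X) (m : X) : IsClosed (Ici m) := by
  rw [← isOpen_compl_iff, isOpen_iff_forall_mem_open]
  intro y hy
  obtain ⟨U, hU, hUu, hmU, hyU⟩ := hX.priestley m y hy
  exact ⟨Uᶜ, fun z hz hzm => hz (hUu hzm hmU), hU.compl.isOpen, hyU⟩

lemma sep_closed_not_le (hX : IsLSpace X) {C : Set X} {z : X} (hC : IsClosed C)
    (h : ∀ c ∈ C, ¬ c ≤ z) :
    ∃ U : Set X, IsClopen U ∧ IsUpperSet U ∧ C ⊆ U ∧ z ∉ U := by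
  haveI := hX.compact
  choose U hU hUu hcU hzU using fun c : C => hX.priestley c z (h c c.2)
  have hCc : IsCompact C := hC.isCompact
  rcases hCc.elim_finite_subcover U (fun c => (hU c).isOpen)
      (fun x hx => mem_iUnion.2 ⟨⟨x, hx⟩, hcU ⟨x, hx⟩⟩) with ⟨t, ht⟩
  refine ⟨⋃ c ∈ t, U c, ?_, ?_, ht, ?_⟩
  · exact t.finite_toSet.isClopen_biUnion (fun c _ => hU c)
  · exact isUpperSet_iUnion₂ (fun c _ => hUu c)
  · simp only [mem_iUnion]; rintro ⟨c, _, hc⟩; exact hzU c hc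

lemma sep_closedUpset (hX : IsLSpace X) {C : Set X} {z : X} (hC : IsClosed C)
    (hCu : IsUpperSet C) (hz : z ∉ C) :
    ∃ U : Set X, IsClopen U ∧ IsUpperSet U ∧ C ⊆ U ∧ z ∉ U :=
  sep_closed_not_le hX hC (fun c hc hcz => hz (hCu hcz hc))

lemma isClosed_lowerClosure_of (hX : IsLSpace X) {C : Set X} (hC : IsCompact C) :
    IsClosed (lowerClosure C : Set X) := by
  haveI := hX.compact
  rw [← isOpen_compl_iff, isOpen_iff_forall_mem_open]
  intro z hz
  have h : ∀ c : C, ¬ z ≤ (c : X) := by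
    rintro ⟨c, hc⟩ hle
    exact hz (mem_lowerClosure.2 ⟨c, hc, hle⟩)
  choose U hU hUu hzU hcU using fun c : C => hX.priestley z c (h c)
  rcases hC.elim_finite_subcover (fun c : C => (U c)ᶜ) (fun c => (hU c).compl.isOpen)
      (fun x hx => mem_iUnion.2 ⟨⟨x, hx⟩, hcU ⟨x, hx⟩⟩) with ⟨t, ht⟩
  by_cases htn : t.Nonempty
  · refine ⟨⋂ c ∈ t, U c, ?_, ?_, ?_⟩
    · rintro x hx hxl
      obtain ⟨c, hc, hxc⟩ := mem_lowerClosure.1 hxl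
      have : c ∈ ⋂ c ∈ t, U c := by
        simp only [mem_iInter] at hx ⊢
        intro i hi
        exact (hUu i) hxc (hx i hi)
      obtain ⟨i, hi, hci⟩ := by simpa only [mem_iUnion, mem_compl_iff] using ht hc
      simp only [mem_iInter] at this
      exact hci (this i hi)
    · exact isOpen_biInter_finset (fun c _ => (hU c).isOpen)
    · simp only [mem_iInter]; exact fun c _ => hzU c
  · refine ⟨univ, ?_, isOpen_univ, mem_univ z⟩
    rintro x - hxl
    obtain ⟨c, hc, -⟩ := mem_lowerClosure.1 hxl
    have := ht hc
    simp only [Finset.not_nonempty_iff_eq_empty.1 htn] at this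
    simpa using this

lemma exists_clopen_disjoint_closed (hX : IsLSpace X) {C : Set X} {z : X}
    (hC : IsClosed C) (hz : z ∉ C) :
    ∃ D : Set X, IsClopen D ∧ z ∈ D ∧ D ∩ C = ∅ := by
  haveI := hX.compact
  have h : ∀ c : C, ∃ D : Set X, IsClopen D ∧ z ∈ D ∧ (c : X) ∉ D := by
    rintro ⟨c, hc⟩
    by_cases hle : c ≤ z
    · have hzc : ¬ z ≤ c := fun h => hz ((le_antisymm hle h) ▸ hc)
      obtain ⟨U, hU, hUu, hzU, hcU⟩ := hX.priestley z c hzc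
      exact ⟨U, hU, hzU, hcU⟩
    · obtain ⟨U, hU, hUu, hcU, hzU⟩ := hX.priestley c z hle
      exact ⟨Uᶜ, hU.compl, hzU, fun h => h hcU⟩
  choose D hD hzD hcD using h
  rcases hC.isCompact.elim_finite_subcover (fun c : C => (D c)ᶜ) (fun c => (hD c).compl.isOpen)
      (fun x hx => mem_iUnion.2 ⟨⟨x, hx⟩, hcD ⟨x, hx⟩⟩) with ⟨t, ht⟩
  refine ⟨⋂ c ∈ t, D c, t.finite_toSet.isClopen_biInter (fun c _ => hD c), ?_, ?_⟩
  · simp only [mem_iInter]; exact fun c _ => hzD c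
  · ext x
    simp only [mem_inter_iff, mem_iInter, mem_empty_iff_false, iff_false, not_and]
    intro hxD hxC
    obtain ⟨i, hi, hxi⟩ := by simpa only [mem_iUnion, mem_compl_iff] using ht hxC
    exact hxi (hxD i hi)

end Basic
section Part2
variable {X : Type*} [TopologicalSpace X] [PartialOrder X]

lemma isUpperSet_closure_of (hX : IsLSpace X) {A : Set X} (hA : IsUpperSet A) :
    IsUpperSet (closure A) := by
  intro x z hxz hx
  by_contra hzc
  obtain ⟨C, hC, hzC, hCA⟩ := exists_clopen_disjoint_closed hX isClosed_closure hzc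
  have hxl : x ∈ (lowerClosure C : Set X) := mem_lowerClosure.2 ⟨z, hzC, hxz⟩
  obtain ⟨a, haC, haA⟩ := (mem_closure_iff.1 hx) _ (hX.esakia C hC).isOpen hxl
  obtain ⟨c, hcC, hac⟩ := mem_lowerClosure.1 haC
  have : c ∈ C ∩ closure A := ⟨hcC, subset_closure (hA hac haA)⟩
  rw [hCA] at this
  exact this

lemma isClopen_closure_openUpper (hX : IsLSpace X) {W : Set X} (hW : IsOpen W)
    (hWu : IsUpperSet W) : IsClopen (closure W) :=
  ⟨isClosed_closure, hX.eod W hW hWu⟩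

lemma exists_clopen_between (hX : IsLSpace X) {W : Set X} {x : X} (hW : IsOpen W)
    (hWu : IsUpperSet W) (hx : x ∈ W) :
    ∃ U : Set X, IsClopen U ∧ IsUpperSet U ∧ x ∈ U ∧ U ⊆ W := by
  haveI := hX.compact
  have h : ∀ y : (Wᶜ : Set X), ¬ x ≤ (y : X) := by
    rintro ⟨y, hy⟩ hle
    exact hy (hWu hle hx)
  choose U hU hUu hxU hyU using fun y : (Wᶜ : Set X) => hX.priestley x y (h y)
  have hWc : IsCompact (Wᶜ : Set X) := hW.isClosed_compl.isCompact
  rcases hWc.elim_finite_subcover (fun y : (Wᶜ : Set X) => (U y)ᶜ)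
      (fun y => (hU y).compl.isOpen)
      (fun z hz => mem_iUnion.2 ⟨⟨z, hz⟩, hyU ⟨z, hz⟩⟩) with ⟨t, ht⟩
  refine ⟨⋂ y ∈ t, U y, t.finite_toSet.isClopen_biInter (fun y _ => hU y),
      isUpperSet_iInter₂ (fun y _ => hUu y), by simp only [mem_iInter]; exact fun y _ => hxU y, ?_⟩
  intro z hz
  by_contra hzW
  obtain ⟨i, hi, hzi⟩ := by simpa only [mem_iUnion, mem_compl_iff] using ht hzW
  simp only [mem_iInter] at hz
  exact hzi (hz i hi)

lemma localic_mem_of_closure {y : X} (hy : y ∈ localicPart X) {W : Set X}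
    (hWu : IsUpperSet W) (h : y ∈ closure W) : y ∈ W := by
  obtain ⟨w, hwy, hwW⟩ := (mem_closure_iff.1 h) _ hy.isOpen (le_refl y)
  exact hWu hwy hwW

lemma localic_of_criterion (hX : IsLSpace X) {m : X}
    (h : ∀ W : Set X, IsOpen W → IsUpperSet W → m ∈ closure W → m ∈ W) :
    m ∈ localicPart X := by
  set W₀ : Set X := (Iic m)ᶜ with hW₀
  have hW₀o : IsOpen W₀ := (isClosed_Iic_of hX m).isOpen_compl
  have hW₀u : IsUpperSet W₀ := (isLowerSet_Iic m).compl
  have hmW₀ : m ∉ W₀ := fun hm => hm (le_refl m)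
  have hmcl : m ∉ closure W₀ := fun hc => hmW₀ (h _ hW₀o hW₀u hc)
  have hsub : closure W₀ ⊆ W₀ := by
    intro x hx hxm
    exact hmcl ((isUpperSet_closure_of hX hW₀u) hxm hx)
  have : IsClosed W₀ := by
    have : closure W₀ = W₀ := Subset.antisymm hsub subset_closure
    rw [← this]; exact isClosed_closure
  have hopen : IsOpen (Iic m) := by
    have h2 := this.isOpen_compl
    rwa [hW₀, compl_compl] at h2
  exact ⟨isClosed_Iic_of hX m, hopen⟩

end Part2
section Part3
variable {X : Type*} [TopologicalSpace X] [PartialOrder X]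

lemma wayBelow_mono_left {V' V U : Set X} (h : V' ⊆ V) (hVU : WayBelowSet V U) :
    WayBelowSet V' U :=
  fun W hW hWu hUW => h.trans (hVU W hW hWu hUW)

lemma wayBelow_mono_right {V U U' : Set X} (h : U ⊆ U') (hVU : WayBelowSet V U) :
    WayBelowSet V U' :=
  fun W hW hWu hUW => hVU W hW hWu (h.trans hUW)

lemma subset_of_wayBelow {V U : Set X} (hU : IsOpen U) (hUu : IsUpperSet U)
    (hVU : WayBelowSet V U) : V ⊆ U :=
  hVU U hU hUu subset_closure

lemma isUpperSet_of_wayBelow_dummy : True := trivial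

lemma wayBelowSet_kernel {U : Set X} : WayBelowSet (kernelSet U) U := by
  intro W hW hWu hUW
  rintro x ⟨V, ⟨hV, hVu, hVU⟩, hxV⟩
  exact hVU W hW hWu hUW hxV

lemma wayBelow_of_subset_kernel {S U : Set X} (h : S ⊆ kernelSet U) : WayBelowSet S U :=
  wayBelow_mono_left h wayBelowSet_kernel

lemma kernel_subset {U : Set X} (hU : IsOpen U) (hUu : IsUpperSet U) : kernelSet U ⊆ U :=
  subset_of_wayBelow hU hUu wayBelowSet_kernel

lemma kernel_isOpen {U : Set X} : IsOpen (kernelSet U) :=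
  isOpen_sUnion (fun V hV => hV.1.isOpen)

lemma kernel_isUpperSet {U : Set X} : IsUpperSet (kernelSet U) := by
  rintro x z hxz ⟨V, ⟨hV, hVu, hVU⟩, hxV⟩
  exact ⟨V, ⟨hV, hVu, hVU⟩, hVu hxz hxV⟩

lemma kernel_mono {U U' : Set X} (h : U ⊆ U') : kernelSet U ⊆ kernelSet U' := by
  rintro x ⟨V, ⟨hV, hVu, hVU⟩, hxV⟩
  exact ⟨V, ⟨hV, hVu, wayBelow_mono_right h hVU⟩, hxV⟩

lemma mem_kernel_of {V U : Set X} (hV : IsClopen V) (hVu : IsUpperSet V)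
    (hVU : WayBelowSet V U) : V ⊆ kernelSet U :=
  fun x hx => ⟨V, ⟨hV, hVu, hVU⟩, hx⟩

/-- Existence of minimal elements below a given element in a closed set. -/
lemma exists_minimal_below (hX : IsLSpace X) {F : Set X} (hF : IsClosed F) {x : X}
    (hx : x ∈ F) : ∃ m ∈ F, m ≤ x ∧ ∀ y ∈ F, y ≤ m → y = m := by
  haveI := hX.compact
  set s : Set Xᵒᵈ := {y : Xᵒᵈ | OrderDual.ofDual y ∈ F ∧ OrderDual.ofDual y ≤ x} with hs
  have H := zorn_le_nonempty₀ (α := Xᵒᵈ) s ?_ (OrderDual.toDual x) ⟨hx, le_rfl⟩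
  · obtain ⟨m, hxm, hm⟩ := H
    refine ⟨OrderDual.ofDual m, hm.prop.1, hm.prop.2, fun y hy hym => ?_⟩
    have hys : (OrderDual.toDual y) ∈ s := ⟨hy, le_trans hym hm.prop.2⟩
    have hmy : (OrderDual.ofDual m) ≤ y :=
      hm.2 hys (show m ≤ OrderDual.toDual y from hym)
    exact le_antisymm hym hmy
  · rintro c hcs hc y₀ hy₀
    haveI : Nonempty c := ⟨⟨y₀, hy₀⟩⟩
    set t : c → Set X := fun z => F ∩ Iic x ∩ Iic (OrderDual.ofDual (z : Xᵒᵈ)) with ht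
    have htcl : ∀ z : c, IsClosed (t z) :=
      fun z => ((hF.inter (isClosed_Iic_of hX x)).inter (isClosed_Iic_of hX _))
    have htne : ∀ z : c, (t z).Nonempty := by
      rintro ⟨z, hz⟩
      exact ⟨OrderDual.ofDual z, ⟨(hcs hz).1, (hcs hz).2⟩, le_rfl⟩
    have htd : Directed (· ⊇ ·) t := by
      rintro z₁ z₂
      rcases eq_or_ne (z₁ : Xᵒᵈ) (z₂ : Xᵒᵈ) with heq | hne
      · exact ⟨z₁, Subset.rfl, by rw [ht]; simp only [heq]; exact Subset.rfl⟩
      · rcases hc z₁.2 z₂.2 hne with h | h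
        · -- z₁ ≤ᵒᵈ z₂, i.e. ofDual z₂ ≤ ofDual z₁ in X
          exact ⟨z₂, fun a ha => ⟨ha.1, le_trans ha.2 h⟩, Subset.rfl⟩
        · exact ⟨z₁, Subset.rfl, fun a ha => ⟨ha.1, le_trans ha.2 h⟩⟩
    obtain ⟨m', hm'⟩ := IsCompact.nonempty_iInter_of_directed_nonempty_isCompact_isClosed
      t htd htne (fun z => (htcl z).isCompact) htcl
    simp only [mem_iInter] at hm'
    have hm's : (OrderDual.toDual m') ∈ s := by
      obtain h := hm' ⟨y₀, hy₀⟩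
      exact ⟨h.1.1, h.1.2⟩
    exact ⟨OrderDual.toDual m', hm's, fun z hz => (hm' ⟨z, hz⟩).2⟩

end Part3
section Part4
variable {X : Type*} [TopologicalSpace X] [PartialOrder X]

/-- The main engine: minimal elements of intersections of self-approximating
directed families of clopen upsets are localic. -/
lemma engine_localic (hX : IsLSpace X) {𝒮 : Set (Set X)} (hne : 𝒮.Nonempty)
    (hcu : ∀ S ∈ 𝒮, IsClopen S ∧ IsUpperSet S)
    (hdir : ∀ S ∈ 𝒮, ∀ T ∈ 𝒮, ∃ R ∈ 𝒮, R ⊆ S ∧ R ⊆ T)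
    (happrox : ∀ S ∈ 𝒮, ∃ S' ∈ 𝒮, WayBelowSet S' S)
    {m : X} (hm : m ∈ ⋂₀ 𝒮) (hmin : ∀ x ∈ ⋂₀ 𝒮, x ≤ m → x = m) :
    m ∈ localicPart X := by
  haveI := hX.compact
  apply localic_of_criterion hX
  intro W hW hWu hmW
  set G := closure W with hG
  have hGc : IsClopen G := isClopen_closure_openUpper hX hW hWu
  haveI : Nonempty 𝒮 := hne.to_subtype
  set t : 𝒮 → Set X := fun S => (S : Set X) ∩ Iic m ∩ Gᶜ with htdef
  have htcl : ∀ S : 𝒮, IsClosed (t S) :=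
    fun S => (((hcu S S.2).1.1.inter (isClosed_Iic_of hX m)).inter hGc.2.isClosed_compl)
  have htd : Directed (· ⊇ ·) t := by
    rintro S T
    obtain ⟨R, hR, hRS, hRT⟩ := hdir S S.2 T T.2
    exact ⟨⟨R, hR⟩, fun x hx => ⟨⟨hRS hx.1.1, hx.1.2⟩, hx.2⟩,
      fun x hx => ⟨⟨hRT hx.1.1, hx.1.2⟩, hx.2⟩⟩
  have hint : (univ ∩ ⋂ S : 𝒮, t S) = ∅ := by
    ext x
    simp only [univ_inter, mem_iInter, mem_empty_iff_false, iff_false]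
    intro hx
    obtain ⟨S, hS⟩ := hne
    have h1 : ∀ T ∈ 𝒮, x ∈ T := fun T hT => (hx ⟨T, hT⟩).1.1
    have h2 : x ≤ m := (hx ⟨S, hS⟩).1.2
    have h3 : x = m := hmin x h1 h2
    exact (hx ⟨S, hS⟩).2 (h3 ▸ hmW)
  obtain ⟨S, hS⟩ := isCompact_univ.elim_directed_family_closed t htcl hint htd
  rw [univ_inter] at hS
  have hSG : (S : Set X) ∩ Iic m ⊆ G := by
    intro x hx
    by_contra hxG
    have : x ∈ t S := ⟨hx, hxG⟩
    rw [hS] at this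
    exact this
  obtain ⟨S', hS'mem, hS'wb⟩ := happrox S S.2
  have hWo : IsOpen (W ∪ (Iic m)ᶜ) := hW.union (isClosed_Iic_of hX m).isOpen_compl
  have hWuu : IsUpperSet (W ∪ (Iic m)ᶜ) := hWu.union (isLowerSet_Iic m).compl
  have hsub : (S : Set X) ⊆ closure (W ∪ (Iic m)ᶜ) := by
    intro x hx
    by_cases hxm : x ≤ m
    · exact closure_mono subset_union_left (hSG ⟨hx, hxm⟩)
    · exact subset_closure (Or.inr hxm)
  have hfin : S' ⊆ W ∪ (Iic m)ᶜ := hS'wb _ hWo hWuu hsub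
  rcases hfin (hm S' hS'mem) with h | h
  · exact h
  · exact absurd (le_refl m) h

lemma interpolation (hX : IsCLSpace X) {V U : Set X} (hV : IsClopen V) (hU : IsClopen U)
    (hUu : IsUpperSet U) (hVU : WayBelowSet V U) :
    ∃ W : Set X, IsClopen W ∧ IsUpperSet W ∧ WayBelowSet V W ∧ WayBelowSet W U ∧ W ⊆ U := by
  haveI := hX.1.compact
  set 𝒜 := {V' : Set X | IsClopen V' ∧ IsUpperSet V' ∧ WayBelowSet V' U} with h𝒜
  set S := ⋃ V' : 𝒜, kernelSet (V' : Set X) with hSdef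
  have hSo : IsOpen S := isOpen_iUnion (fun _ => kernel_isOpen)
  have hSu : IsUpperSet S := isUpperSet_iUnion (fun V' => kernel_isUpperSet)
  have hUS : U ⊆ closure S := by
    have h2 : kernelSet U ⊆ closure S := by
      rintro y ⟨V', hV', hyV'⟩
      have h3 : (V' : Set X) ⊆ closure (kernelSet V') := hX.2 V' hV'.1 hV'.2.1
      have h4 : kernelSet V' ⊆ S := subset_iUnion_of_subset (⟨V', hV'⟩ : 𝒜) Subset.rfl
      exact closure_mono h4 (h3 hyV')
    intro x hx
    have h1 : x ∈ closure (kernelSet U) := hX.2 U hU hUu hx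
    have := closure_mono h2 h1
    rwa [closure_closure] at this
  have hVS : V ⊆ S := hVU S hSo hSu hUS
  obtain ⟨t, ht⟩ := hV.1.isCompact.elim_finite_subcover
    (fun V' : 𝒜 => kernelSet (V' : Set X)) (fun _ => kernel_isOpen) hVS
  refine ⟨⋃ V' ∈ t, (V' : Set X), ?_, ?_, ?_, ?_, ?_⟩
  · exact t.finite_toSet.isClopen_biUnion (fun V' _ => V'.2.1)
  · exact isUpperSet_iUnion₂ (fun V' _ => V'.2.2.1)
  · apply wayBelow_of_subset_kernel
    intro x hx
    obtain ⟨V', hV't, hxV'⟩ := by simpa only [mem_iUnion] using ht hx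
    exact kernel_mono (subset_biUnion_of_mem (u := fun V' : 𝒜 => (V' : Set X)) hV't) hxV'
  · intro W' hW' hW'u hUW'
    intro x hx
    obtain ⟨V', hV't, hxV'⟩ := by simpa only [mem_iUnion] using hx
    exact V'.2.2.2 W' hW' hW'u hUW' hxV'
  · intro x hx
    obtain ⟨V', hV't, hxV'⟩ := by simpa only [mem_iUnion] using hx
    exact subset_of_wayBelow hU.isOpen hUu V'.2.2.2 hxV'

/-- Chain construction producing Scott upsets. -/
lemma chain_scott (hX : IsCLSpace X) (P : Set X → Prop) (W0 : Set X)
    (hW0 : IsClopen W0 ∧ IsUpperSet W0 ∧ P W0)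
    (step : ∀ W : Set X, IsClopen W → IsUpperSet W → P W →
      ∃ W' : Set X, (IsClopen W' ∧ IsUpperSet W' ∧ P W') ∧ WayBelowSet W' W) :
    ∃ c : ℕ → Set X, c 0 = W0 ∧ (∀ n, IsClopen (c n) ∧ IsUpperSet (c n) ∧ P (c n)) ∧
      (∀ n, WayBelowSet (c (n + 1)) (c n)) ∧ IsScottUpset (⋂ n, c n) := by
  haveI := hX.1.compact
  have step' : ∀ W : {W : Set X // IsClopen W ∧ IsUpperSet W ∧ P W},
      ∃ W' : {W : Set X // IsClopen W ∧ IsUpperSet W ∧ P W},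
        WayBelowSet (W' : Set X) (W : Set X) := by
    rintro ⟨W, h1, h2, h3⟩
    obtain ⟨W', hW', hwb⟩ := step W h1 h2 h3
    exact ⟨⟨W', hW'⟩, hwb⟩
  choose next hnext using step'
  set cc : ℕ → {W : Set X // IsClopen W ∧ IsUpperSet W ∧ P W} :=
    fun n => Nat.rec ⟨W0, hW0⟩ (fun _ ih => next ih) n with hcc
  set c : ℕ → Set X := fun n => (cc n : Set X) with hc
  have hcprop : ∀ n, IsClopen (c n) ∧ IsUpperSet (c n) ∧ P (c n) := fun n => (cc n).2
  have hwb : ∀ n, WayBelowSet (c (n + 1)) (c n) := fun n => hnext (cc n)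
  have hanti : ∀ n, c (n + 1) ⊆ c n :=
    fun n => subset_of_wayBelow (hcprop n).1.isOpen (hcprop n).2.1 (hwb n)
  have hmono : ∀ {i j}, i ≤ j → c j ⊆ c i := by
    intro i j hij
    induction j with
    | zero => rw [Nat.le_zero.1 hij]
    | succ k ih =>
      rcases Nat.lt_or_ge i (k + 1) with h | h
      · exact (hanti k).trans (ih (Nat.lt_succ_iff.1 h))
      · rw [Nat.le_antisymm hij h]
  refine ⟨c, rfl, hcprop, hwb, ?_, ?_, ?_⟩
  · exact isClosed_iInter (fun n => (hcprop n).1.1)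
  · exact isUpperSet_iInter (fun n => (hcprop n).2.1)
  · intro m hm hmin
    have h𝒮 : ⋂₀ (range c) = ⋂ n, c n := sInter_range c
    apply engine_localic hX.1 (range_nonempty c) ?_ ?_ ?_ (h𝒮 ▸ hm) (h𝒮 ▸ hmin)
    · rintro S ⟨n, rfl⟩
      exact ⟨(hcprop n).1, (hcprop n).2.1⟩
    · rintro S ⟨n, rfl⟩ T ⟨k, rfl⟩
      exact ⟨c (max n k), ⟨max n k, rfl⟩, hmono (Nat.le_max_left n k),
        hmono (Nat.le_max_right n k)⟩
    · rintro S ⟨n, rfl⟩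
      exact ⟨c (n + 1), ⟨n + 1, rfl⟩, hwb n⟩

end Part4
section Part5
variable {X : Type*} [TopologicalSpace X] [PartialOrder X]

lemma exists_scott_between (hX : IsCLSpace X) {V U : Set X} (hV : IsClopen V)
    (hU : IsClopen U) (hUu : IsUpperSet U) (hVU : WayBelowSet V U) :
    ∃ F : Set X, IsScottUpset F ∧ V ⊆ F ∧ F ⊆ U := by
  have hstep : ∀ W : Set X, IsClopen W → IsUpperSet W → WayBelowSet V W →
      ∃ W' : Set X, (IsClopen W' ∧ IsUpperSet W' ∧ WayBelowSet V W') ∧ WayBelowSet W' W := by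
    intro W h1 h2 h3
    obtain ⟨W', hW'c, hW'u, hVW', hW'W, -⟩ := interpolation hX hV h1 h2 h3
    exact ⟨W', ⟨hW'c, hW'u, hVW'⟩, hW'W⟩
  obtain ⟨c, hc0, hcprop, hwb, hscott⟩ := chain_scott hX (fun W => WayBelowSet V W) U
    ⟨hU, hUu, hVU⟩ hstep
  refine ⟨⋂ n, c n, hscott, ?_, ?_⟩
  · exact subset_iInter (fun n =>
      subset_of_wayBelow (hcprop n).1.isOpen (hcprop n).2.1 (hcprop n).2.2)
  · exact (iInter_subset c 0).trans (hc0 ▸ Subset.rfl)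

lemma exists_localic_witness (hX : IsCLSpace X) {P Q : Set X} (hP : IsClopen P)
    (hPu : IsUpperSet P) (hQ : IsClopen Q) (hQu : IsUpperSet Q) {x : X} (hx : x ∈ P)
    (hxQ : x ∉ Q) :
    ∃ y ∈ localicPart X, y ∈ P ∧ y ∉ Q := by
  haveI := hX.1.compact
  have hstep : ∀ W : Set X, IsClopen W → IsUpperSet W → (W ∩ Qᶜ).Nonempty →
      ∃ W' : Set X, (IsClopen W' ∧ IsUpperSet W' ∧ (W' ∩ Qᶜ).Nonempty) ∧ WayBelowSet W' W := by
    intro W h1 h2 h3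
    obtain ⟨z, hzW, hzQ⟩ := h3
    have hzc : z ∈ closure (kernelSet W) := hX.2 W h1 h2 hzW
    obtain ⟨w, hw, hwk⟩ := (mem_closure_iff.1 hzc) (W ∩ Qᶜ)
      (h1.isOpen.inter hQ.1.isOpen_compl) ⟨hzW, hzQ⟩
    obtain ⟨V', hV', hwV'⟩ := hwk
    exact ⟨V', ⟨hV'.1, hV'.2.1, ⟨w, hwV', hw.2⟩⟩, hV'.2.2⟩
  obtain ⟨c, hc0, hcprop, hwb, hscott⟩ := chain_scott hX (fun W => (W ∩ Qᶜ).Nonempty) P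
    ⟨hP, hPu, ⟨x, hx, hxQ⟩⟩ hstep
  have hanti : ∀ n, c (n + 1) ⊆ c n :=
      fun n => subset_of_wayBelow (hcprop n).1.isOpen (hcprop n).2.1 (hwb n)
  have hmono : ∀ {i j}, i ≤ j → c j ⊆ c i := by
    intro i j hij
    induction j with
    | zero => rw [Nat.le_zero.1 hij]
    | succ k ih =>
      rcases Nat.lt_or_ge i (k + 1) with h | h
      · exact (hanti k).trans (ih (Nat.lt_succ_iff.1 h))
      · rw [Nat.le_antisymm hij h]
  set s : ℕ → Set X := fun n => c n ∩ Qᶜ with hs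
  have hscl : ∀ n, IsClosed (s n) := fun n => (hcprop n).1.1.inter hQ.2.isClosed_compl
  have hdir : Directed (· ⊇ ·) s := by
    intro i j
    exact ⟨max i j, fun z hz => ⟨hmono (Nat.le_max_left i j) hz.1, hz.2⟩,
      fun z hz => ⟨hmono (Nat.le_max_right i j) hz.1, hz.2⟩⟩
  obtain ⟨z₀, hz₀⟩ := IsCompact.nonempty_iInter_of_directed_nonempty_isCompact_isClosed
    s hdir (fun n => (hcprop n).2.2) (fun n => (hscl n).isCompact) hscl
  simp only [mem_iInter, hs, mem_inter_iff] at hz₀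
  have hz₀F : z₀ ∈ ⋂ n, c n := mem_iInter.2 (fun n => (hz₀ n).1)
  obtain ⟨m, hmF, hmz, hmin⟩ := exists_minimal_below hX.1 hscott.1 hz₀F
  refine ⟨m, hscott.2.2 m hmF hmin, ?_, ?_⟩
  · exact hc0 ▸ (mem_iInter.1 hmF 0)
  · exact fun hmQ => (hz₀ 0).2 (hQu hmz hmQ)

lemma trace_subset_of (hX : IsCLSpace X) {P Q : Set X} (hP : IsClopen P)
    (hPu : IsUpperSet P) (hQ : IsClopen Q) (hQu : IsUpperSet Q)
    (h : ∀ y ∈ localicPart X, y ∈ P → y ∈ Q) : P ⊆ Q := by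
  intro x hx
  by_contra hxQ
  obtain ⟨y, hy, hyP, hyQ⟩ := exists_localic_witness hX hP hPu hQ hQu hx hxQ
  exact hyQ (h y hy hyP)

lemma scott_exists_minimal_localic (hX : IsLSpace X) {F : Set X} (hF : IsScottUpset F)
    {x : X} (hx : x ∈ F) : ∃ m, m ∈ F ∧ m ≤ x ∧ m ∈ localicPart X := by
  obtain ⟨m, hmF, hmx, hmin⟩ := exists_minimal_below hX hF.1 hx
  exact ⟨m, hmF, hmx, hF.2.2 m hmF hmin⟩

lemma scott_approx (hX : IsCLSpace X) {F U : Set X} (hF : IsScottUpset F)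
    (hU : IsClopen U) (hUu : IsUpperSet U) (hFU : F ⊆ U) :
    ∃ U' : Set X, IsClopen U' ∧ IsUpperSet U' ∧ F ⊆ U' ∧ WayBelowSet U' U := by
  haveI := hX.1.compact
  have hFk : F ⊆ kernelSet U := by
    intro x hx
    obtain ⟨m, hmF, hmx, hml⟩ := scott_exists_minimal_localic hX.1 hF hx
    have : m ∈ closure (kernelSet U) := hX.2 U hU hUu (hFU hmF)
    exact kernel_isUpperSet hmx (localic_mem_of_closure hml kernel_isUpperSet this)
  set 𝒜 := {V : Set X // IsClopen V ∧ IsUpperSet V ∧ WayBelowSet V U} with h𝒜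
  have hcov : F ⊆ ⋃ V : 𝒜, (V : Set X) := by
    intro x hx
    obtain ⟨V, hV, hxV⟩ := hFk hx
    exact mem_iUnion.2 ⟨⟨V, hV⟩, hxV⟩
  obtain ⟨t, ht⟩ := (hF.1.isCompact).elim_finite_subcover
    (fun V : 𝒜 => (V : Set X)) (fun V => V.2.1.isOpen) hcov
  refine ⟨⋃ V ∈ t, (V : Set X), t.finite_toSet.isClopen_biUnion (fun V _ => V.2.1),
    isUpperSet_iUnion₂ (fun V _ => V.2.2.1), ht, ?_⟩
  intro W hW hWu hUW x hx
  obtain ⟨V, hVt, hxV⟩ := by simpa only [mem_iUnion] using hx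
  exact V.2.2.2 W hW hWu hUW hxV

lemma closedUpset_eq_sInter (hX : IsLSpace X) {C : Set X} (hC : IsClosed C)
    (hCu : IsUpperSet C) :
    C = ⋂₀ {U : Set X | IsClopen U ∧ IsUpperSet U ∧ C ⊆ U} := by
  apply Subset.antisymm
  · intro x hx U hU
    exact hU.2.2 hx
  · intro x hx
    by_contra hxC
    obtain ⟨U, hU, hUu, hCU, hxU⟩ := sep_closedUpset hX hC hCu hxC
    exact hxU (hx U ⟨hU, hUu, hCU⟩)

end Part5
section Localic
variable {X : Type*} [TopologicalSpace X] [PartialOrder X]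
variable (t : TopologicalSpace (localicPart X))
variable (ht : ∀ U : Set (localicPart X), @IsOpen _ t U ↔
  ∃ V : Set X, IsClopen V ∧ IsUpperSet V ∧ U = ((↑) : localicPart X → X) ⁻¹' V)

include ht in
lemma trace_open (hX : IsLSpace X) {W : Set X} (hW : IsOpen W) (hWu : IsUpperSet W) :
    @IsOpen _ t (((↑) : localicPart X → X) ⁻¹' W) := by
  rw [ht]
  refine ⟨closure W, isClopen_closure_openUpper hX hW hWu, isUpperSet_closure_of hX hWu, ?_⟩
  ext y
  exact ⟨fun hy => subset_closure hy, fun hy => localic_mem_of_closure y.2 hWu hy⟩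

include ht in
lemma spec_closure_singleton (hX : IsLSpace X) (z w : localicPart X) :
    z ∈ @closure _ t {w} ↔ (z : X) ≤ (w : X) := by
  constructor
  · intro h
    by_contra hle
    obtain ⟨U, hU, hUu, hzU, hwU⟩ := hX.priestley z w hle
    have hO : @IsOpen _ t (((↑) : localicPart X → X) ⁻¹' U) := (ht _).2 ⟨U, hU, hUu, rfl⟩
    obtain ⟨w', hw', hw'2⟩ := (mem_closure_iff.1 h) _ hO hzU
    rw [mem_singleton_iff] at hw'2
    exact hwU (hw'2 ▸ hw')
  · intro hzw
    rw [mem_closure_iff]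
    intro O hO hzO
    obtain ⟨V, hV, hVu, rfl⟩ := (ht O).1 hO
    exact ⟨w, hVu hzw hzO, rfl⟩

include ht in
lemma scott_trace_isCompact (hX : IsLSpace X) {F : Set X} (hF : IsScottUpset F) :
    @IsCompact _ t (((↑) : localicPart X → X) ⁻¹' F) := by
  haveI := hX.compact
  apply @isCompact_of_finite_subcover _ t
  intro ι U hUo hsub
  choose V hV hVu hUV using fun i => (ht (U i)).1 (hUo i)
  have hEsub : F ⊆ ⋃ i, V i := by
    intro x hx
    obtain ⟨m, hmF, hmx, hml⟩ := scott_exists_minimal_localic hX hF hx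
    have hm' : (⟨m, hml⟩ : localicPart X) ∈ ((↑) : localicPart X → X) ⁻¹' F := hmF
    obtain ⟨i, hi⟩ := mem_iUnion.1 (hsub hm')
    rw [hUV i] at hi
    exact mem_iUnion.2 ⟨i, (hVu i) hmx hi⟩
  obtain ⟨tf, htf⟩ := (hF.1.isCompact).elim_finite_subcover V (fun i => (hV i).isOpen) hEsub
  refine ⟨tf, ?_⟩
  intro y hy
  obtain ⟨i, hit, hyi⟩ := mem_iUnion₂.1 (htf hy)
  exact mem_iUnion₂.2 ⟨i, hit, (hUV i) ▸ hyi⟩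

include ht in
lemma satCompact_scott (hX : IsLSpace X) {B : Set (localicPart X)}
    (hBc : @IsCompact _ t B) {𝒰 : Set (Set (localicPart X))}
    (h𝒰 : ∀ V ∈ 𝒰, @IsOpen _ t V) (hB𝒰 : B = ⋂₀ 𝒰) :
    ∃ F : Set X, IsScottUpset F ∧ ((↑) : localicPart X → X) ⁻¹' F = B := by
  haveI := hX.compact
  set ℱ := {U : Set X | IsClopen U ∧ IsUpperSet U ∧ B ⊆ ((↑) : localicPart X → X) ⁻¹' U}
    with hℱ
  set F := ⋂₀ ℱ with hF
  have hFcl : IsClosed F := isClosed_sInter (fun U hU => hU.1.1)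
  have hFu : IsUpperSet F := isUpperSet_sInter (fun U hU => hU.2.1)
  have htrace : ((↑) : localicPart X → X) ⁻¹' F = B := by
    apply Subset.antisymm
    · intro y hy
      by_contra hyB
      rw [hB𝒰] at hyB
      obtain ⟨O, hO𝒰, hyO⟩ := by simpa only [mem_sInter, not_forall] using hyB
      obtain ⟨P, hP, hPu, rfl⟩ := (ht O).1 (h𝒰 O hO𝒰)
      have hPℱ : P ∈ ℱ := ⟨hP, hPu, hB𝒰 ▸ (sInter_subset_of_mem hO𝒰)⟩
      exact hyO (hy P hPℱ)
    · intro b hb U hU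
      exact hU.2.2 hb
  have hup : ∀ x ∈ F, ∃ b ∈ B, ((b : localicPart X) : X) ≤ x := by
    intro x hx
    by_contra hno
    push_neg at hno
    choose U hU hUu hbU hxU using fun b : B => hX.priestley (b : X) x (by
      intro hle; exact (hno b b.2) hle)
    have hcov : B ⊆ ⋃ b : B, ((↑) : localicPart X → X) ⁻¹' (U b) :=
      fun b hb => mem_iUnion.2 ⟨⟨b, hb⟩, hbU ⟨b, hb⟩⟩
    obtain ⟨tf, htf⟩ := hBc.elim_finite_subcover
      (fun b : B => ((↑) : localicPart X → X) ⁻¹' (U b))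
      (fun b => (ht _).2 ⟨U b, hU b, hUu b, rfl⟩) hcov
    set Ubig := ⋃ b ∈ tf, U b with hUbig
    have hUbigℱ : Ubig ∈ ℱ := by
      refine ⟨tf.finite_toSet.isClopen_biUnion (fun b _ => hU b),
        isUpperSet_iUnion₂ (fun b _ => hUu b), ?_⟩
      intro b hb
      obtain ⟨i, hit, hbi⟩ := mem_iUnion₂.1 (htf hb)
      exact mem_iUnion₂.2 ⟨i, hit, hbi⟩
    have : x ∈ Ubig := hx Ubig hUbigℱ
    obtain ⟨i, hit, hxi⟩ := mem_iUnion₂.1 this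
    exact hxU i hxi
  refine ⟨F, ⟨hFcl, hFu, ?_⟩, htrace⟩
  intro m hm hmin
  obtain ⟨b, hb, hbm⟩ := hup m hm
  have hbF : ((b : localicPart X) : X) ∈ F := by
    have hb' := hb
    rw [← htrace] at hb'
    exact hb' 
  have := hmin _ hbF hbm
  rw [← this]
  exact (b : localicPart X).2

/-- The up-closure property of Scott upsets, relative to a trace inclusion. -/
lemma scott_subset_of_trace (hX : IsLSpace X) {F U : Set X} (hF : IsScottUpset F)
    (hUu : IsUpperSet U)
    (h : ∀ y : localicPart X, (y : X) ∈ F → (y : X) ∈ U) : F ⊆ U := by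
  intro x hx
  obtain ⟨m, hmF, hmx, hml⟩ := scott_exists_minimal_localic hX hF hx
  exact hUu hmx (h ⟨m, hml⟩ hmF)

end Localic
section Morphism
variable {X₁ X₂ : Type*} [TopologicalSpace X₁] [PartialOrder X₁]
  [TopologicalSpace X₂] [PartialOrder X₂]

lemma proper_preimage_scott (hX₁ : IsCLSpace X₁) (hX₂ : IsCLSpace X₂) {f : X₁ → X₂}
    (hfL : IsLMorphism f)
    (hker : ∀ U : Set X₂, IsClopen U → IsUpperSet U → f ⁻¹' kernelSet U ⊆ kernelSet (f ⁻¹' U))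
    {F : Set X₂} (hF : IsScottUpset F) :
    IsScottUpset (f ⁻¹' F) := by
  haveI := hX₁.1.compact
  set ℱ := {U : Set X₂ | IsClopen U ∧ IsUpperSet U ∧ F ⊆ U} with hℱ
  set 𝒮 := (fun U => f ⁻¹' U) '' ℱ with h𝒮
  have hFrep : F = ⋂₀ ℱ := closedUpset_eq_sInter hX₂.1 hF.1 hF.2.1
  have hrep : f ⁻¹' F = ⋂₀ 𝒮 := by
    ext x
    simp only [h𝒮, mem_sInter, mem_image, forall_exists_index, and_imp, mem_preimage]
    constructor
    · rintro hx S U hU rfl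
      exact hU.2.2 hx
    · intro h
      have := hFrep
      rw [this]
      intro U hU
      exact h (f ⁻¹' U) U hU rfl
  have hne : 𝒮.Nonempty := ⟨f ⁻¹' univ, ⟨univ, ⟨isClopen_univ, isUpperSet_univ, subset_univ F⟩, rfl⟩⟩
  have hcu : ∀ S ∈ 𝒮, IsClopen S ∧ IsUpperSet S := by
    rintro S ⟨U, hU, rfl⟩
    exact ⟨hU.1.preimage hfL.1, hU.2.1.preimage hfL.2.1⟩
  have hdir : ∀ S ∈ 𝒮, ∀ T ∈ 𝒮, ∃ R ∈ 𝒮, R ⊆ S ∧ R ⊆ T := by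
    rintro S ⟨U, hU, rfl⟩ T ⟨U', hU', rfl⟩
    exact ⟨f ⁻¹' (U ∩ U'), ⟨U ∩ U', ⟨hU.1.inter hU'.1, hU.2.1.inter hU'.2.1,
      subset_inter hU.2.2 hU'.2.2⟩, rfl⟩, fun x hx => hx.1, fun x hx => hx.2⟩
  have hap : ∀ S ∈ 𝒮, ∃ S' ∈ 𝒮, WayBelowSet S' S := by
    rintro S ⟨U, hU, rfl⟩
    obtain ⟨U', hU'c, hU'u, hFU', hwb⟩ := scott_approx hX₂ hF hU.1 hU.2.1 hU.2.2
    refine ⟨f ⁻¹' U', ⟨U', ⟨hU'c, hU'u, hFU'⟩, rfl⟩, ?_⟩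
    apply wayBelow_of_subset_kernel
    intro x hx
    exact hker U hU.1 hU.2.1 (mem_kernel_of hU'c hU'u hwb hx)
  refine ⟨hF.1.preimage hfL.1, hF.2.1.preimage hfL.2.1, ?_⟩
  intro m hm hmin
  exact engine_localic hX₁.1 hne hcu hdir hap (hrep ▸ hm) (hrep ▸ hmin)

end Morphism

/-- An L-morphism between CL-spaces is proper iff its restriction `g` to the
localic parts is a proper map: `g` is continuous, the down-closure (in the
specialization order, `z ≤ w` iff `z ∈ closure {w}`) of `g '' A` is closed for
every closed `A`, and `g ⁻¹' B` is compact for every compact saturated `B`. -/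
theorem properLMorphism_iff_proper_restriction {X₁ X₂ : Type*}
    [TopologicalSpace X₁] [PartialOrder X₁] [TopologicalSpace X₂] [PartialOrder X₂]
    (hX₁ : IsCLSpace X₁) (hX₂ : IsCLSpace X₂)
    (tY₁ : TopologicalSpace (localicPart X₁)) (tY₂ : TopologicalSpace (localicPart X₂))
    (htY₁ : ∀ U : Set (localicPart X₁), @IsOpen _ tY₁ U ↔
      ∃ V : Set X₁, IsClopen V ∧ IsUpperSet V ∧ U = ((↑) : localicPart X₁ → X₁) ⁻¹' V)
    (htY₂ : ∀ U : Set (localicPart X₂), @IsOpen _ tY₂ U ↔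
      ∃ V : Set X₂, IsClopen V ∧ IsUpperSet V ∧ U = ((↑) : localicPart X₂ → X₂) ⁻¹' V)
    (f : X₁ → X₂) (hf : IsLMorphism f)
    (g : localicPart X₁ → localicPart X₂) (hg : ∀ y : localicPart X₁, (g y : X₂) = f ↑y) :
    IsProperLMorphism f ↔
      (@Continuous _ _ tY₁ tY₂ g ∧
       (∀ A : Set (localicPart X₁), @IsClosed _ tY₁ A →
          @IsClosed _ tY₂ {z : localicPart X₂ | ∃ w ∈ g '' A, z ∈ @closure _ tY₂ {w}}) ∧
       (∀ B : Set (localicPart X₂), @IsCompact _ tY₂ B →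
          (∃ 𝒰 : Set (Set (localicPart X₂)), (∀ V ∈ 𝒰, @IsOpen _ tY₂ V) ∧ B = ⋂₀ 𝒰) →
          @IsCompact _ tY₁ (g ⁻¹' B))) := by
  haveI := hX₁.1.compact
  haveI := hX₂.1.compact
  constructor
  · rintro ⟨-, hker⟩
    refine ⟨?_, ?_, ?_⟩
    · -- continuity of g
      rw [@continuous_def _ _ tY₁ tY₂]
      intro O hO
      obtain ⟨P, hP, hPu, rfl⟩ := (htY₂ O).1 hO
      have heq : g ⁻¹' (Subtype.val ⁻¹' P) = Subtype.val ⁻¹' (f ⁻¹' P) := by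
        ext y
        simp only [mem_preimage]
        rw [hg y]
      rw [heq]
      exact trace_open tY₁ htY₁ hX₁.1 (hP.preimage hf.1).isOpen (hPu.preimage hf.2.1)
    · -- closedness of down-images
      intro A hA
      obtain ⟨V₁, hV₁, hV₁u, hAcV⟩ := (htY₁ Aᶜ).1 hA.isOpen_compl
      have hA' : A = Subtype.val ⁻¹' V₁ᶜ := by
        rw [preimage_compl, ← hAcV, compl_compl]
      set C := f '' (V₁ᶜ) with hC
      have hCc : IsCompact C := (hV₁.2.isClosed_compl.isCompact).image hf.1
      set E := (lowerClosure C : Set X₂) with hE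
      have hEcl : IsClosed E := isClosed_lowerClosure_of hX₂.1 hCc
      have hEl : IsLowerSet E := (lowerClosure C).lower
      have hDeq : {z : localicPart X₂ | ∃ w ∈ g '' A, z ∈ @closure _ tY₂ {w}}
          = Subtype.val ⁻¹' E := by
        ext z
        simp only [mem_setOf_eq, mem_preimage]
        constructor
        · rintro ⟨w, ⟨a, haA, rfl⟩, hz⟩
          have hzw : (z : X₂) ≤ ((g a : localicPart X₂) : X₂) :=
            (spec_closure_singleton tY₂ htY₂ hX₂.1 z (g a)).1 hz
          rw [hg a] at hzw
          have haV : (a : X₁) ∈ V₁ᶜ := by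
            rw [hA'] at haA
            exact haA
          exact mem_lowerClosure.2 ⟨f a, ⟨(a : X₁), haV, rfl⟩, hzw⟩
        · rintro hzE
          obtain ⟨c, ⟨x, hxV, rfl⟩, hzc⟩ := mem_lowerClosure.1 hzE
          have hIci : IsScottUpset (Ici (z : X₂)) := by
            refine ⟨isClosed_Ici_of hX₂.1 _, isUpperSet_Ici _, ?_⟩
            intro x' hx' hmin
            have : (z : X₂) = x' := hmin (z : X₂) (le_refl _) hx'
            rw [← this]
            exact z.2
          have hSc : IsScottUpset (f ⁻¹' Ici (z : X₂)) :=
            proper_preimage_scott hX₁ hX₂ hf hker hIci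
          have hxmem : x ∈ f ⁻¹' Ici (z : X₂) := hzc
          obtain ⟨m, hmF, hmx, hml⟩ := scott_exists_minimal_localic hX₁.1 hSc hxmem
          refine ⟨g ⟨m, hml⟩, ⟨⟨m, hml⟩, ?_, rfl⟩, ?_⟩
          · rw [hA']
            intro hmV₁
            exact hxV (hV₁u hmx hmV₁)
          · apply (spec_closure_singleton tY₂ htY₂ hX₂.1 _ _).2
            rw [hg ⟨m, hml⟩]
            exact hmF
      rw [hDeq, ← @isOpen_compl_iff _ _ tY₂, ← preimage_compl]
      exact trace_open tY₂ htY₂ hX₂.1 hEcl.isOpen_compl hEl.compl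
    · -- preimages of compact saturated sets
      intro B hBc hBsat
      obtain ⟨𝒰, h𝒰, hB𝒰⟩ := hBsat
      obtain ⟨F, hFs, hFtr⟩ := satCompact_scott tY₂ htY₂ hX₂.1 hBc h𝒰 hB𝒰
      have hSc : IsScottUpset (f ⁻¹' F) := proper_preimage_scott hX₁ hX₂ hf hker hFs
      have hgB : g ⁻¹' B = Subtype.val ⁻¹' (f ⁻¹' F) := by
        ext y
        constructor
        · intro hyB
          have h1 : g y ∈ Subtype.val ⁻¹' F := by
            rw [hFtr]
            exact hyB
          show f ↑y ∈ F
          rw [← hg y]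
          exact h1
        · intro hyF
          have h1 : ((g y : localicPart X₂) : X₂) ∈ F := by
            rw [hg y]
            exact hyF
          show g y ∈ B
          rw [← hFtr]
          exact h1
      rw [hgB]
      exact scott_trace_isCompact tY₁ htY₁ hX₁.1 hSc
  · rintro ⟨-, hclosed, hperfect⟩
    refine ⟨hf, ?_⟩
    intro U hU hUu x hx
    obtain ⟨V, ⟨hVc, hVu, hVU⟩, hfxV⟩ := hx
    have hpre : IsClopen (f ⁻¹' V) ∧ IsUpperSet (f ⁻¹' V) :=
      ⟨hVc.preimage hf.1, hVu.preimage hf.2.1⟩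
    have hVwb : WayBelowSet (f ⁻¹' V) (f ⁻¹' U) := by
      intro W₁ hW₁ hW₁u hsub1
      obtain ⟨F, hFs, hVF, hFU⟩ := exists_scott_between hX₂ hVc hU hUu hVU
      set B : Set (localicPart X₂) := Subtype.val ⁻¹' F with hB
      have hBc : @IsCompact _ tY₂ B := scott_trace_isCompact tY₂ htY₂ hX₂.1 hFs
      have hBsat : ∃ 𝒰 : Set (Set (localicPart X₂)),
          (∀ V' ∈ 𝒰, @IsOpen _ tY₂ V') ∧ B = ⋂₀ 𝒰 := by
        refine ⟨(fun U' => Subtype.val ⁻¹' U') ''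
          {U' : Set X₂ | IsClopen U' ∧ IsUpperSet U' ∧ F ⊆ U'}, ?_, ?_⟩
        · rintro V' ⟨U', hU', rfl⟩
          exact (htY₂ _).2 ⟨U', hU'.1, hU'.2.1, rfl⟩
        · ext z
          simp only [hB, mem_preimage, mem_sInter, mem_image, forall_exists_index, and_imp]
          constructor
          · rintro hz S U' hU' rfl
            exact hU'.2.2 hz
          · intro h
            have hFrep := closedUpset_eq_sInter hX₂.1 hFs.1 hFs.2.1
            rw [hFrep]
            intro U' hU'
            exact h (Subtype.val ⁻¹' U') U' hU' rfl
      have hKc : @IsCompact _ tY₁ (g ⁻¹' B) := hperfect B hBc hBsat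
      have hmemW : ∀ y : localicPart X₁, y ∈ g ⁻¹' B → (y : X₁) ∈ W₁ := by
        intro y hy
        have h1 : f ↑y ∈ F := by
          rw [← hg y]
          exact hy
        have h3 : (y : X₁) ∈ closure W₁ := hsub1 (hFU h1)
        exact localic_mem_of_closure y.2 hW₁u h3
      have hselect : ∀ y : {y : localicPart X₁ // y ∈ g ⁻¹' B},
          ∃ T : Set X₁, IsClopen T ∧ IsUpperSet T ∧ ((y : localicPart X₁) : X₁) ∈ T ∧ T ⊆ W₁ :=
        fun y => exists_clopen_between hX₁.1 hW₁ hW₁u (hmemW y y.2)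
      choose T hT hTu hyT hTW using hselect
      obtain ⟨tf, htf⟩ := hKc.elim_finite_subcover (fun y => Subtype.val ⁻¹' (T y))
        (fun y => (htY₁ _).2 ⟨T y, hT y, hTu y, rfl⟩)
        (fun y hy => mem_iUnion.2 ⟨⟨y, hy⟩, hyT ⟨y, hy⟩⟩)
      set Tb := ⋃ y ∈ tf, T y with hTb
      have hTbc : IsClopen Tb := tf.finite_toSet.isClopen_biUnion (fun y _ => hT y)
      have hTbu : IsUpperSet Tb := isUpperSet_iUnion₂ (fun y _ => hTu y)
      have hTbW : Tb ⊆ W₁ := by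
        intro x' hx'
        obtain ⟨i, hit, hxi⟩ := mem_iUnion₂.1 hx'
        exact hTW i hxi
      set A : Set (localicPart X₁) := (Subtype.val ⁻¹' Tb)ᶜ with hA
      have hAcl : @IsClosed _ tY₁ A := by
        rw [← @isOpen_compl_iff _ _ tY₁, hA, compl_compl]
        exact trace_open tY₁ htY₁ hX₁.1 hTbc.isOpen hTbu
      have hDcl := hclosed A hAcl
      set D := {z : localicPart X₂ | ∃ w ∈ g '' A, z ∈ @closure _ tY₂ {w}} with hD
      obtain ⟨U', hU'c, hU'u, hDc⟩ := (htY₂ Dᶜ).1 hDcl.isOpen_compl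
      have hBD : B ⊆ Subtype.val ⁻¹' U' := by
        intro b hb
        rw [← hDc]
        intro hbD
        obtain ⟨w, ⟨a, haA, rfl⟩, hbw⟩ := hbD
        have hle : (b : X₂) ≤ ((g a : localicPart X₂) : X₂) :=
          (spec_closure_singleton tY₂ htY₂ hX₂.1 b (g a)).1 hbw
        rw [hg a] at hle
        have hfaF : f (a : X₁) ∈ F := hFs.2.1 hle hb
        have hgaB : a ∈ g ⁻¹' B := by
          show g a ∈ B
          show ((g a : localicPart X₂) : X₂) ∈ F
          rw [hg a]
          exact hfaF
        obtain ⟨i, hit, hai⟩ := mem_iUnion₂.1 (htf hgaB)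
        exact haA (mem_iUnion₂.2 ⟨i, hit, hai⟩)
      have hFU' : F ⊆ U' := by
        apply scott_subset_of_trace hX₂.1 hFs hU'u
        intro y hyF
        exact hBD hyF
      have htrace : ∀ y ∈ localicPart X₁, y ∈ f ⁻¹' U' → y ∈ Tb := by
        intro y hy hyU'
        by_contra hyTb
        have hyA : (⟨y, hy⟩ : localicPart X₁) ∈ A := fun h => hyTb h
        have hmemcl : g ⟨y, hy⟩ ∈ @closure _ tY₂ {g ⟨y, hy⟩} :=
          (spec_closure_singleton tY₂ htY₂ hX₂.1 _ _).2 (le_refl _)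
        have hyD : g ⟨y, hy⟩ ∈ D :=
          ⟨g ⟨y, hy⟩, ⟨⟨y, hy⟩, hyA, rfl⟩, hmemcl⟩
        have hyDc : g ⟨y, hy⟩ ∈ Dᶜ := by
          rw [hDc]
          show ((g ⟨y, hy⟩ : localicPart X₂) : X₂) ∈ U'
          rw [hg ⟨y, hy⟩]
          exact hyU'
        exact hyDc hyD
      have hsub2 : f ⁻¹' U' ⊆ Tb :=
        trace_subset_of hX₁ (hU'c.preimage hf.1)
          (hU'u.preimage hf.2.1) hTbc hTbu htrace
      intro x' hx'
      exact hTbW (hsub2 (hFU' (hVF hx')))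
    exact mem_kernel_of hpre.1 hpre.2 hVwb hfxV
end

section
/- Let X be an SL-space with localic part Y. Then X is a Scott-stable CL-space if and only if Y is locally compact and coherent, i.e. for every open V ⊆ Y and y ∈ V there are an open W and a compact K in Y with y ∈ W ⊆ K ⊆ V, and the intersection of any two compact saturated subsets of Y is compact. -/
open Set Topology

section Aux

variable {X : Type*} [TopologicalSpace X] [PartialOrder X]

namespace LSpaceAux

lemma isClosed_Iic (hX : IsLSpace X) (x : X) : IsClosed (Set.Iic x) := by
  rw [← isOpen_compl_iff, isOpen_iff_forall_mem_open]
  intro z hz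
  obtain ⟨U, hUc, hUu, hzU, hxU⟩ := hX.priestley z x hz
  exact ⟨U, fun u hu hle => hxU (hUu hle hu), hUc.2, hzU⟩

lemma isClosed_Ici (hX : IsLSpace X) (x : X) : IsClosed (Set.Ici x) := by
  rw [← isOpen_compl_iff, isOpen_iff_forall_mem_open]
  intro z hz
  obtain ⟨U, hUc, hUu, hxU, hzU⟩ := hX.priestley x z hz
  exact ⟨Uᶜ, fun u hu hle => hu (hUu hle hxU), hUc.compl.2, hzU⟩

/-- A localic point in the closure of an upper set belongs to the upper set. -/
lemma mem_of_mem_closure {y : X} (hy : y ∈ localicPart X) {W : Set X}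
    (hWu : IsUpperSet W) (h : y ∈ closure W) : y ∈ W := by
  obtain ⟨w, hw1, hw2⟩ := mem_closure_iff.mp h (Set.Iic y) hy.2 le_rfl
  exact hWu hw1 hw2

/-- An open set is contained in the closure of its localic part. -/
lemma subset_closure_inter (hsp : Dense (localicPart X)) {U : Set X} (hU : IsOpen U) :
    U ⊆ closure (U ∩ localicPart X) :=
  hsp.open_subset_closure_inter hU

lemma subset_of_inter_localic_subset (hsp : Dense (localicPart X)) {U V : Set X}
    (hU : IsOpen U) (hV : IsClosed V) (h : U ∩ localicPart X ⊆ V) : U ⊆ V := by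
  refine (subset_closure_inter hsp hU).trans ?_
  rw [← hV.closure_eq]
  exact closure_mono h

/-- Minimal elements below a given element of a closed set. -/
lemma exists_minimal_le (hX : IsLSpace X) {F : Set X} (hF : IsClosed F) {x : X}
    (hx : x ∈ F) : ∃ m ∈ F, m ≤ x ∧ ∀ y ∈ F, y ≤ m → y = m := by
  haveI := hX.compact
  have ih : ∀ c ⊆ {z : Xᵒᵈ | OrderDual.ofDual z ∈ F ∧ OrderDual.ofDual z ≤ x},
      IsChain (· ≤ ·) c → ∀ y ∈ c, ∃ ub ∈ {z : Xᵒᵈ | OrderDual.ofDual z ∈ F ∧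
        OrderDual.ofDual z ≤ x}, ∀ z ∈ c, z ≤ ub := by
    intro c hcs hchain y hy
    have hne : Nonempty c := ⟨⟨y, hy⟩⟩
    have key : (⋂ z : c, (F ∩ Set.Iic x ∩ Set.Iic (OrderDual.ofDual z.1))).Nonempty := by
      apply IsCompact.nonempty_iInter_of_directed_nonempty_isCompact_isClosed
      · rintro ⟨a, ha⟩ ⟨b, hb⟩
        rcases hchain.total ha hb with h | h
        · exact ⟨⟨b, hb⟩, Set.inter_subset_inter_right _ (Set.Iic_subset_Iic.2
            (show OrderDual.ofDual b ≤ OrderDual.ofDual a from h)), Set.Subset.rfl⟩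
        · exact ⟨⟨a, ha⟩, Set.Subset.rfl, Set.inter_subset_inter_right _
            (Set.Iic_subset_Iic.2 (show OrderDual.ofDual a ≤ OrderDual.ofDual b from h))⟩
      · rintro ⟨a, ha⟩
        exact ⟨OrderDual.ofDual a, ⟨(hcs ha).1, (hcs ha).2⟩, le_rfl⟩
      · intro i
        exact (((hF.inter (isClosed_Iic hX x)).inter (isClosed_Iic hX _))).isCompact
      · intro i
        exact (hF.inter (isClosed_Iic hX x)).inter (isClosed_Iic hX _)
    obtain ⟨lb, hlb⟩ := key
    simp only [Set.mem_iInter, Set.mem_inter_iff] at hlb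
    refine ⟨OrderDual.toDual lb, ⟨(hlb ⟨y, hy⟩).1.1, (hlb ⟨y, hy⟩).1.2⟩, fun z hz => ?_⟩
    exact (hlb ⟨z, hz⟩).2
  obtain ⟨m, hxm, hm⟩ := zorn_le_nonempty₀ (α := Xᵒᵈ)
      {z : Xᵒᵈ | OrderDual.ofDual z ∈ F ∧ OrderDual.ofDual z ≤ x} ih
      (OrderDual.toDual x) ⟨hx, le_rfl⟩
  refine ⟨OrderDual.ofDual m, hm.1.1, hm.1.2, fun y hy hle => ?_⟩
  exact le_antisymm hle (hm.2 (y := OrderDual.toDual y) ⟨hy, hle.trans hm.1.2⟩ hle)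

/-- Each point of an open upper set lies in a clopen upper subset. -/
lemma exists_clopen_upper_of_mem_open (hX : IsLSpace X) {W : Set X} (hWo : IsOpen W)
    (hWu : IsUpperSet W) {x : X} (hx : x ∈ W) :
    ∃ V : Set X, IsClopen V ∧ IsUpperSet V ∧ x ∈ V ∧ V ⊆ W := by
  haveI := hX.compact
  by_contra h
  push_neg at h
  set ι := {C : Set X // IsClopen C ∧ IsUpperSet C ∧ x ∈ C} with hι
  haveI : Nonempty ι := ⟨⟨Set.univ, isClopen_univ, isUpperSet_univ, Set.mem_univ x⟩⟩
  have key : (⋂ C : ι, (C.1 ∩ Wᶜ)).Nonempty := by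
    apply IsCompact.nonempty_iInter_of_directed_nonempty_isCompact_isClosed
    · rintro ⟨A, hA⟩ ⟨B, hB⟩
      exact ⟨⟨A ∩ B, hA.1.inter hB.1, hA.2.1.inter hB.2.1, hA.2.2, hB.2.2⟩,
        Set.inter_subset_inter_left _ Set.inter_subset_left,
        Set.inter_subset_inter_left _ Set.inter_subset_right⟩
    · rintro ⟨C, hC⟩
      rcases Set.not_subset.1 (h C hC.1 hC.2.1 hC.2.2) with ⟨z, hz1, hz2⟩
      exact ⟨z, hz1, hz2⟩
    · exact fun i => (i.2.1.1.inter hWo.isClosed_compl).isCompact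
    · exact fun i => i.2.1.1.inter hWo.isClosed_compl
  obtain ⟨z, hz⟩ := key
  simp only [Set.mem_iInter, Set.mem_inter_iff] at hz
  have hxz : x ≤ z := by
    by_contra hxz
    obtain ⟨U, hUc, hUu, hxU, hzU⟩ := hX.priestley x z hxz
    exact hzU (hz ⟨U, hUc, hUu, hxU⟩).1
  exact (hz ⟨Set.univ, isClopen_univ, isUpperSet_univ, Set.mem_univ x⟩).2 (hWu hxz hx)

/-- A closed upper set can be separated from an outside point by a clopen upper set. -/
lemma exists_clopen_upper_superset (hX : IsLSpace X) {F : Set X} (hF : IsClosed F)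
    (hFu : IsUpperSet F) {x : X} (hx : x ∉ F) :
    ∃ C : Set X, IsClopen C ∧ IsUpperSet C ∧ F ⊆ C ∧ x ∉ C := by
  haveI := hX.compact
  have h : ∀ f : F, ∃ V : Set X, IsClopen V ∧ IsUpperSet V ∧ (f : X) ∈ V ∧ x ∉ V := by
    rintro ⟨f, hf⟩
    have hfx : ¬ f ≤ x := fun hle => hx (hFu hle hf)
    obtain ⟨U, hUc, hUu, hfU, hxU⟩ := hX.priestley f x hfx
    exact ⟨U, hUc, hUu, hfU, hxU⟩
  choose V hV1 hV2 hV3 hV4 using h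
  obtain ⟨t, ht⟩ := hF.isCompact.elim_finite_subcover V (fun f => (hV1 f).2)
    (fun z hz => Set.mem_iUnion.2 ⟨⟨z, hz⟩, hV3 ⟨z, hz⟩⟩)
  refine ⟨⋃ f ∈ t, V f, isClopen_biUnion_finset (fun f _ => hV1 f),
    isUpperSet_iUnion₂ (fun f _ => hV2 f), ht, ?_⟩
  simp only [Set.mem_iUnion]
  rintro ⟨f, _, hf⟩
  exact hV4 f hf

lemma totallySeparated (hX : IsLSpace X) : TotallySeparatedSpace X := by
  rw [totallySeparatedSpace_iff_exists_isClopen]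
  intro x y hxy
  have h : ¬ x ≤ y ∨ ¬ y ≤ x := by
    by_contra h
    push_neg at h
    exact hxy (le_antisymm h.1 h.2)
  rcases h with h | h
  · obtain ⟨U, hUc, _, hxU, hyU⟩ := hX.priestley x y h
    exact ⟨U, hUc, hxU, hyU⟩
  · obtain ⟨U, hUc, _, hyU, hxU⟩ := hX.priestley y x h
    exact ⟨Uᶜ, hUc.compl, hxU, by simpa using hyU⟩

lemma t2 (hX : IsLSpace X) : T2Space X := by
  haveI := totallySeparated hX
  constructor
  intro x y hxy
  obtain ⟨U, hUc, hxU, hyU⟩ := exists_isClopen_of_totally_separated hxy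
  exact ⟨U, Uᶜ, hUc.2, hUc.compl.2, hxU, hyU, disjoint_compl_right⟩

lemma exists_clopen_mem_subset (hX : IsLSpace X) {O : Set X} (hO : IsOpen O) {m : X}
    (hm : m ∈ O) : ∃ C : Set X, IsClopen C ∧ m ∈ C ∧ C ⊆ O := by
  haveI := hX.compact
  haveI := t2 hX
  haveI := totallySeparated hX
  exact compact_exists_isClopen_in_isOpen hO hm

/-- A closed upper set satisfying the density property is a Scott upset. -/
lemma scottUpset_of_dagger (hX : IsLSpace X) {F : Set X} (hF : IsClosed F)
    (hFu : IsUpperSet F)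
    (hdag : ∀ W : Set X, IsOpen W → IsUpperSet W → F ⊆ closure W → F ⊆ W) :
    IsScottUpset F := by
  refine ⟨hF, hFu, fun m hm hmin => ?_⟩
  have hWo : IsOpen (Set.Iic m)ᶜ := (isClosed_Iic hX m).isOpen_compl
  have hWu : IsUpperSet (Set.Iic m)ᶜ := (isLowerSet_Iic m).compl
  have hns : ¬ F ⊆ closure (Set.Iic m)ᶜ := by
    intro h
    exact (hdag _ hWo hWu h) hm le_rfl
  obtain ⟨x, hxF, hxc⟩ := Set.not_subset.1 hns
  rw [mem_closure_iff] at hxc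
  push_neg at hxc
  obtain ⟨O, hOo, hxO, hO⟩ := hxc
  have hOsub : O ⊆ Set.Iic m := by
    intro z hz
    by_contra hzm
    have hmem : z ∈ O ∩ (Set.Iic m)ᶜ := ⟨hz, hzm⟩
    rw [hO] at hmem
    exact hmem
  have hxm : x = m := hmin x hxF (hOsub hxO)
  obtain ⟨C, hC, hmC, hCO⟩ := exists_clopen_mem_subset hX hOo (hxm ▸ hxO)
  have hIic : Set.Iic m = (lowerClosure C : Set X) := by
    apply Set.Subset.antisymm
    · intro z hz
      exact ⟨m, hmC, hz⟩
    · exact lowerClosure_min (hCO.trans hOsub) (isLowerSet_Iic m)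
  show IsClopen (Set.Iic m)
  rw [hIic]
  exact hX.esakia C hC

/-- Scott upsets satisfy the density property. -/
lemma dagger_of_scottUpset (hX : IsLSpace X) {F : Set X} (hS : IsScottUpset F)
    {W : Set X} (hWo : IsOpen W) (hWu : IsUpperSet W) (h : F ⊆ closure W) : F ⊆ W := by
  intro x hx
  obtain ⟨m, hmF, hmx, hmin⟩ := exists_minimal_le hX hS.1 hx
  have hmY : m ∈ localicPart X := hS.2.2 m hmF hmin
  exact hWu hmx (mem_of_mem_closure hmY hWu (h hmF))

lemma wb_mono_left {V' V U : Set X} (h : V' ⊆ V) (hw : WayBelowSet V U) :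
    WayBelowSet V' U := fun W hWo hWu hcl => h.trans (hw W hWo hWu hcl)

lemma wb_mono_right {V U U' : Set X} (hw : WayBelowSet V U) (h : U ⊆ U') :
    WayBelowSet V U' := fun W hWo hWu hcl => hw W hWo hWu (h.trans hcl)

lemma wb_subset {V U : Set X} (hU : IsClopen U) (hUu : IsUpperSet U)
    (hw : WayBelowSet V U) : V ⊆ U :=
  hw U hU.2 hUu subset_closure

lemma kernelSet_isOpen (U : Set X) : IsOpen (kernelSet U) :=
  isOpen_sUnion (fun V hV => hV.1.2)

lemma kernelSet_isUpperSet (U : Set X) : IsUpperSet (kernelSet U) :=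
  isUpperSet_sUnion (fun V hV => hV.2.1)

section Yside

variable (tY : TopologicalSpace (localicPart X))

/-- The trace of a Scott upset on the localic part is compact. -/
lemma compact_pre (hX : IsLSpace X)
    (htY : ∀ U : Set (localicPart X), @IsOpen _ tY U ↔
      ∃ V : Set X, IsClopen V ∧ IsUpperSet V ∧ U = ((↑) : localicPart X → X) ⁻¹' V)
    {F : Set X} (hS : IsScottUpset F) :
    @IsCompact _ tY (((↑) : localicPart X → X) ⁻¹' F) := by
  haveI := hX.compact
  apply isCompact_of_finite_subcover
  intro ι U hUo hcov
  have hV : ∀ i, ∃ V : Set X, IsClopen V ∧ IsUpperSet V ∧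
      U i = ((↑) : localicPart X → X) ⁻¹' V := fun i => (htY (U i)).1 (hUo i)
  choose V hV1 hV2 hV3 using hV
  have hFcov : F ⊆ ⋃ i, V i := by
    intro x hx
    obtain ⟨m, hmF, hmx, hmin⟩ := exists_minimal_le hX hS.1 hx
    have hmY : m ∈ localicPart X := hS.2.2 m hmF hmin
    have : (⟨m, hmY⟩ : localicPart X) ∈ ⋃ i, U i := hcov hmF
    obtain ⟨i, hi⟩ := Set.mem_iUnion.1 this
    rw [hV3 i] at hi
    exact Set.mem_iUnion.2 ⟨i, hV2 i hmx hi⟩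
  obtain ⟨t, ht⟩ := hS.1.isCompact.elim_finite_subcover V (fun i => (hV1 i).2) hFcov
  refine ⟨t, fun y hy => ?_⟩
  obtain ⟨i, hit, hi⟩ := Set.mem_iUnion₂.1 (ht hy)
  exact Set.mem_iUnion₂.2 ⟨i, hit, (hV3 i).symm ▸ hi⟩

/-- The trace of a closed upper set on the localic part is saturated. -/
lemma sat_pre (hX : IsLSpace X)
    (htY : ∀ U : Set (localicPart X), @IsOpen _ tY U ↔
      ∃ V : Set X, IsClopen V ∧ IsUpperSet V ∧ U = ((↑) : localicPart X → X) ⁻¹' V)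
    {F : Set X} (hF : IsClosed F) (hFu : IsUpperSet F) :
    ∃ 𝒰 : Set (Set (localicPart X)), (∀ V ∈ 𝒰, @IsOpen _ tY V) ∧
      ((↑) : localicPart X → X) ⁻¹' F = ⋂₀ 𝒰 := by
  refine ⟨{O | ∃ C : Set X, IsClopen C ∧ IsUpperSet C ∧ F ⊆ C ∧
    O = ((↑) : localicPart X → X) ⁻¹' C}, ?_, ?_⟩
  · rintro O ⟨C, hC, hCu, _, rfl⟩
    exact (htY _).2 ⟨C, hC, hCu, rfl⟩
  · apply Set.Subset.antisymm
    · rintro y hy O ⟨C, _, _, hFC, rfl⟩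
      exact hFC hy
    · intro y hy
      by_contra hyF
      obtain ⟨C, hC, hCu, hFC, hyC⟩ := exists_clopen_upper_superset hX hF hFu hyF
      exact hyC (hy _ ⟨C, hC, hCu, hFC, rfl⟩)

/-- From a compact saturated subset of the localic part, a Scott upset. -/
lemma scottUpset_of_compact_saturated (hX : IsLSpace X)
    (htY : ∀ U : Set (localicPart X), @IsOpen _ tY U ↔
      ∃ V : Set X, IsClopen V ∧ IsUpperSet V ∧ U = ((↑) : localicPart X → X) ⁻¹' V)
    {K : Set (localicPart X)} (hK : @IsCompact _ tY K)
    (hsat : ∃ 𝒰 : Set (Set (localicPart X)), (∀ V ∈ 𝒰, @IsOpen _ tY V) ∧ K = ⋂₀ 𝒰) :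
    IsScottUpset (⋂₀ {C : Set X | IsClopen C ∧ IsUpperSet C ∧
        K ⊆ ((↑) : localicPart X → X) ⁻¹' C}) ∧
      ((↑) : localicPart X → X) ⁻¹' (⋂₀ {C : Set X | IsClopen C ∧ IsUpperSet C ∧
        K ⊆ ((↑) : localicPart X → X) ⁻¹' C}) = K := by
  set 𝒞 : Set (Set X) := {C | IsClopen C ∧ IsUpperSet C ∧
    K ⊆ ((↑) : localicPart X → X) ⁻¹' C} with h𝒞
  have hKsub : K ⊆ ((↑) : localicPart X → X) ⁻¹' ⋂₀ 𝒞 := by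
    intro k hk
    intro C hC
    exact hC.2.2 hk
  have hpre : ((↑) : localicPart X → X) ⁻¹' ⋂₀ 𝒞 = K := by
    apply Set.Subset.antisymm ?_ hKsub
    intro y hy
    by_contra hyK
    obtain ⟨𝒰, h𝒰o, h𝒰⟩ := hsat
    have : y ∉ ⋂₀ 𝒰 := by rwa [← h𝒰]
    have hex : ∃ O ∈ 𝒰, y ∉ O := by
      by_contra hcon
      push_neg at hcon
      exact this (fun O hO => hcon O hO)
    obtain ⟨O, hO𝒰, hyO⟩ := hex
    obtain ⟨V, hV, hVu, rfl⟩ := (htY O).1 (h𝒰o O hO𝒰)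
    have hKO : K ⊆ ((↑) : localicPart X → X) ⁻¹' V := by
      rw [h𝒰]; exact fun z hz => hz _ hO𝒰
    exact hyO (hy V ⟨hV, hVu, hKO⟩)
  refine ⟨⟨isClosed_sInter (fun C hC => hC.1.1),
    isUpperSet_sInter (fun C hC => hC.2.1), ?_⟩, hpre⟩
  intro m hm hmin
  have hex : ∃ k ∈ K, (k : X) ≤ m := by
    by_contra hcon
    push_neg at hcon
    have h : ∀ k : K, ∃ V : Set X, IsClopen V ∧ IsUpperSet V ∧ (k.1 : X) ∈ V ∧ m ∉ V := by
      rintro ⟨k, hk⟩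
      obtain ⟨V, hV, hVu, h1, h2⟩ := hX.priestley (k : X) m (hcon k hk)
      exact ⟨V, hV, hVu, h1, h2⟩
    choose V hV1 hV2 hV3 hV4 using h
    have hcov : K ⊆ ⋃ k : K, ((↑) : localicPart X → X) ⁻¹' V k := by
      intro k hk
      exact Set.mem_iUnion.2 ⟨⟨k, hk⟩, hV3 ⟨k, hk⟩⟩
    obtain ⟨t, ht⟩ := hK.elim_finite_subcover _
      (fun k => (htY _).2 ⟨V k, hV1 k, hV2 k, rfl⟩) hcov
    have hC : (⋃ k ∈ t, V k) ∈ 𝒞 := by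
      refine ⟨isClopen_biUnion_finset (fun k _ => hV1 k),
        isUpperSet_iUnion₂ (fun k _ => hV2 k), ?_⟩
      intro z hz
      obtain ⟨k, hkt, hk⟩ := Set.mem_iUnion₂.1 (ht hz)
      exact Set.mem_preimage.2 (Set.mem_iUnion₂.2 ⟨k, hkt, hk⟩)
    obtain ⟨k, _, hk⟩ := Set.mem_iUnion₂.1 (hm _ hC)
    exact hV4 k hk
  obtain ⟨k, hkK, hkm⟩ := hex
  have hkF : (k : X) ∈ ⋂₀ 𝒞 := hKsub hkK
  have : (k : X) = m := hmin _ hkF hkm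
  rw [← this]
  exact k.2

end Yside

/-- Interpolation for the way-below relation in a CL-space. -/
lemma interp (hX : IsLSpace X)
    (hCL : ∀ U : Set X, IsClopen U → IsUpperSet U → U ⊆ closure (kernelSet U))
    {V U : Set X} (hV : IsClopen V) (hU : IsClopen U) (hUu : IsUpperSet U)
    (hw : WayBelowSet V U) :
    ∃ C : Set X, IsClopen C ∧ IsUpperSet C ∧ WayBelowSet V C ∧ WayBelowSet C U := by
  haveI := hX.compact
  set 𝒟 : Set (Set X) := {b | IsClopen b ∧ IsUpperSet b ∧
    ∃ c : Set X, IsClopen c ∧ IsUpperSet c ∧ WayBelowSet b c ∧ WayBelowSet c U} with h𝒟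
  have hDo : IsOpen (⋃₀ 𝒟) := isOpen_sUnion fun b hb => hb.1.2
  have hDu : IsUpperSet (⋃₀ 𝒟) := isUpperSet_sUnion fun b hb => hb.2.1
  have hker : kernelSet U ⊆ closure (⋃₀ 𝒟) := by
    rintro z ⟨c, ⟨hc1, hc2, hc3⟩, hz⟩
    have h1 : kernelSet c ⊆ ⋃₀ 𝒟 := by
      rintro w ⟨b, ⟨hb1, hb2, hb3⟩, hw'⟩
      exact ⟨b, ⟨hb1, hb2, c, hc1, hc2, hb3, hc3⟩, hw'⟩
    exact closure_mono h1 (hCL c hc1 hc2 hz)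
  have hUD : U ⊆ closure (⋃₀ 𝒟) := by
    intro x hx
    have h2 : closure (kernelSet U) ⊆ closure (⋃₀ 𝒟) := by
      rw [← closure_closure (s := ⋃₀ 𝒟)]
      exact closure_mono hker
    exact h2 (hCL U hU hUu hx)
  have hVD : V ⊆ ⋃₀ 𝒟 := hw _ hDo hDu hUD
  have hcov : V ⊆ ⋃ i : {b : Set X // b ∈ 𝒟}, i.1 := by
    intro x hx
    obtain ⟨b, hb, hxb⟩ := hVD hx
    exact Set.mem_iUnion.2 ⟨⟨b, hb⟩, hxb⟩
  obtain ⟨t, ht⟩ := hV.1.isCompact.elim_finite_subcover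
    (fun i : {b : Set X // b ∈ 𝒟} => i.1) (fun i => i.2.1.2) hcov
  have hch : ∀ i : {b : Set X // b ∈ 𝒟}, ∃ c : Set X,
      IsClopen c ∧ IsUpperSet c ∧ WayBelowSet i.1 c ∧ WayBelowSet c U := fun i => i.2.2.2
  choose c hc1 hc2 hc3 hc4 using hch
  refine ⟨⋃ i ∈ t, c i, isClopen_biUnion_finset (fun i _ => hc1 i),
    isUpperSet_iUnion₂ (fun i _ => hc2 i), ?_, ?_⟩
  · intro W hWo hWu hcl
    refine ht.trans (Set.iUnion₂_subset fun i hi => ?_)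
    exact hc3 i W hWo hWu ((Set.subset_biUnion_of_mem hi).trans hcl)
  · intro W hWo hWu hcl
    exact Set.iUnion₂_subset fun i _ => hc4 i W hWo hWu hcl

/-- In a CL-space, a way-below pair admits a Scott upset in between. -/
lemma exists_scottUpset_between (hX : IsLSpace X)
    (hCL : ∀ U : Set X, IsClopen U → IsUpperSet U → U ⊆ closure (kernelSet U))
    {V U : Set X} (hV : IsClopen V) (hU : IsClopen U) (hUu : IsUpperSet U)
    (hw : WayBelowSet V U) :
    ∃ F : Set X, IsScottUpset F ∧ V ⊆ F ∧ F ⊆ U := by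
  haveI := hX.compact
  have step : ∀ p : {c : Set X // IsClopen c ∧ IsUpperSet c ∧ WayBelowSet V c},
      ∃ c' : Set X, IsClopen c' ∧ IsUpperSet c' ∧ WayBelowSet V c' ∧ WayBelowSet c' p.1 :=
    fun p => interp hX hCL hV p.2.1 p.2.2.1 p.2.2.2
  choose f hf1 hf2 hf3 hf4 using step
  set g : ℕ → {c : Set X // IsClopen c ∧ IsUpperSet c ∧ WayBelowSet V c} :=
    fun n => Nat.rec ⟨U, hU, hUu, hw⟩ (fun _ p => ⟨f p, hf1 p, hf2 p, hf3 p⟩) n with hg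
  have hstep : ∀ n, WayBelowSet (g (n+1)).1 (g n).1 := fun n => hf4 (g n)
  have hmono : ∀ n, (g (n+1)).1 ⊆ (g n).1 :=
    fun n => wb_subset (g n).2.1 (g n).2.2.1 (hstep n)
  have hanti : Antitone (fun n => (g n).1) := antitone_nat_of_succ_le hmono
  have hFc : IsClosed (⋂ n, (g n).1) := isClosed_iInter (fun n => (g n).2.1.1)
  have hFu : IsUpperSet (⋂ n, (g n).1) := isUpperSet_iInter (fun n => (g n).2.2.1)
  have hdag : ∀ W : Set X, IsOpen W → IsUpperSet W →
      (⋂ n, (g n).1) ⊆ closure W → (⋂ n, (g n).1) ⊆ W := by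
    intro W hWo hWu hFW
    have hclW : IsOpen (closure W) := hX.eod W hWo hWu
    have hex : ∃ n, (g n).1 ⊆ closure W := by
      by_contra hcon
      push_neg at hcon
      have key : (⋂ n, ((g n).1 ∩ (closure W)ᶜ)).Nonempty := by
        apply IsCompact.nonempty_iInter_of_directed_nonempty_isCompact_isClosed
        · intro a b
          refine ⟨max a b, Set.inter_subset_inter_left _ (hanti (le_max_left a b)),
            Set.inter_subset_inter_left _ (hanti (le_max_right a b))⟩
        · intro n
          obtain ⟨z, h1, h2⟩ := Set.not_subset.1 (hcon n)
          exact ⟨z, h1, h2⟩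
        · intro n
          exact ((g n).2.1.1.inter hclW.isClosed_compl).isCompact
        · intro n
          exact (g n).2.1.1.inter hclW.isClosed_compl
      obtain ⟨z, hz⟩ := key
      simp only [Set.mem_iInter, Set.mem_inter_iff] at hz
      exact (hz 0).2 (hFW (Set.mem_iInter.2 fun n => (hz n).1))
    obtain ⟨n, hn⟩ := hex
    exact (Set.iInter_subset _ (n+1)).trans (hstep n W hWo hWu hn)
  refine ⟨⋂ n, (g n).1, scottUpset_of_dagger hX hFc hFu hdag, ?_,
    Set.iInter_subset (fun n => (g n).1) 0⟩
  exact Set.subset_iInter (fun n => wb_subset (g n).2.1 (g n).2.2.1 (g n).2.2.2)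

/-- Shrinking: a closed set inside a kernel is inside a single clopen upper set
way below. -/
lemma shrink (hX : IsLSpace X) {F A : Set X} (hFc : IsClosed F)
    (hsub : F ⊆ kernelSet A) :
    ∃ A' : Set X, IsClopen A' ∧ IsUpperSet A' ∧ F ⊆ A' ∧ WayBelowSet A' A := by
  haveI := hX.compact
  have hcov : F ⊆ ⋃ i : {b : Set X // IsClopen b ∧ IsUpperSet b ∧ WayBelowSet b A}, i.1 := by
    intro x hx
    obtain ⟨b, hb, hxb⟩ := hsub hx
    exact Set.mem_iUnion.2 ⟨⟨b, hb⟩, hxb⟩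
  obtain ⟨t, ht⟩ := hFc.isCompact.elim_finite_subcover
    (fun i : {b : Set X // IsClopen b ∧ IsUpperSet b ∧ WayBelowSet b A} => i.1)
    (fun i => i.2.1.2) hcov
  refine ⟨⋃ i ∈ t, i.1, isClopen_biUnion_finset (fun i _ => i.2.1),
    isUpperSet_iUnion₂ (fun i _ => i.2.2.1), ht, ?_⟩
  intro W hWo hWu hcl
  exact Set.iUnion₂_subset fun i _ => i.2.2.2 W hWo hWu hcl

/-- Separating clopen upper pairs around two closed upper sets. -/
lemma exists_clopen_pair (hX : IsLSpace X) {F G : Set X}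
    (hF : IsClosed F) (hFu : IsUpperSet F) (hG : IsClosed G) (hGu : IsUpperSet G)
    {W : Set X} (hWo : IsOpen W) (hWu : IsUpperSet W)
    (hcl : F ∩ G ⊆ closure W) :
    ∃ A B : Set X, IsClopen A ∧ IsUpperSet A ∧ F ⊆ A ∧ IsClopen B ∧ IsUpperSet B ∧
      G ⊆ B ∧ A ∩ B ⊆ closure W := by
  haveI := hX.compact
  have hclWc : IsClosed (closure W)ᶜ := (hX.eod W hWo hWu).isClosed_compl
  by_contra hcon
  push_neg at hcon
  set ι := {p : Set X × Set X // IsClopen p.1 ∧ IsUpperSet p.1 ∧ F ⊆ p.1 ∧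
    IsClopen p.2 ∧ IsUpperSet p.2 ∧ G ⊆ p.2} with hι
  have i₀ : ι := ⟨(Set.univ, Set.univ), isClopen_univ, isUpperSet_univ,
    Set.subset_univ F, isClopen_univ, isUpperSet_univ, Set.subset_univ G⟩
  haveI : Nonempty ι := ⟨i₀⟩
  have key : (⋂ i : ι, (i.1.1 ∩ i.1.2 ∩ (closure W)ᶜ)).Nonempty := by
    apply IsCompact.nonempty_iInter_of_directed_nonempty_isCompact_isClosed
    · rintro ⟨⟨A₁, B₁⟩, h1⟩ ⟨⟨A₂, B₂⟩, h2⟩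
      refine ⟨⟨(A₁ ∩ A₂, B₁ ∩ B₂), h1.1.inter h2.1, h1.2.1.inter h2.2.1,
        Set.subset_inter h1.2.2.1 h2.2.2.1, h1.2.2.2.1.inter h2.2.2.2.1,
        h1.2.2.2.2.1.inter h2.2.2.2.2.1,
        Set.subset_inter h1.2.2.2.2.2 h2.2.2.2.2.2⟩, ?_, ?_⟩
      · exact Set.inter_subset_inter_left _
          (Set.inter_subset_inter Set.inter_subset_left Set.inter_subset_left)
      · exact Set.inter_subset_inter_left _
          (Set.inter_subset_inter Set.inter_subset_right Set.inter_subset_right)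
    · rintro ⟨⟨A, B⟩, hAB⟩
      have hne := hcon A B hAB.1 hAB.2.1 hAB.2.2.1 hAB.2.2.2.1 hAB.2.2.2.2.1 hAB.2.2.2.2.2
      obtain ⟨z, hz1, hz2⟩ := Set.not_subset.1 hne
      exact ⟨z, hz1, hz2⟩
    · intro i
      exact ((i.2.1.inter i.2.2.2.2.1).1.inter hclWc).isCompact
    · intro i
      exact (i.2.1.inter i.2.2.2.2.1).1.inter hclWc
  obtain ⟨z, hz⟩ := key
  simp only [Set.mem_iInter, Set.mem_inter_iff] at hz
  have hzF : z ∈ F := by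
    by_contra hzF
    obtain ⟨C, hC, hCu, hFC, hzC⟩ := exists_clopen_upper_superset hX hF hFu hzF
    exact hzC (hz ⟨(C, Set.univ), hC, hCu, hFC, isClopen_univ, isUpperSet_univ,
      Set.subset_univ G⟩).1.1
  have hzG : z ∈ G := by
    by_contra hzG
    obtain ⟨C, hC, hCu, hGC, hzC⟩ := exists_clopen_upper_superset hX hG hGu hzG
    exact hzC (hz ⟨(Set.univ, C), isClopen_univ, isUpperSet_univ, Set.subset_univ F,
      hC, hCu, hGC⟩).1.2
  exact (hz i₀).2 (hcl ⟨hzF, hzG⟩)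

section Yside2

variable (tY : TopologicalSpace (localicPart X))

/-- A clopen upper set squeezed below a compact subset of the localic part is
way below. -/
lemma wb_of_compact_between (hX : IsLSpace X) (hsp : Dense (localicPart X))
    (htY : ∀ U : Set (localicPart X), @IsOpen _ tY U ↔
      ∃ V : Set X, IsClopen V ∧ IsUpperSet V ∧ U = ((↑) : localicPart X → X) ⁻¹' V)
    {V U : Set X} (hV : IsClopen V)
    {K : Set (localicPart X)} (hK : @IsCompact _ tY K)
    (h1 : ((↑) : localicPart X → X) ⁻¹' V ⊆ K)
    (h2 : K ⊆ ((↑) : localicPart X → X) ⁻¹' U) :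
    WayBelowSet V U := by
  intro W' hWo hWu hUcl
  have hmem : ∀ k : K, ∃ A : Set X, IsClopen A ∧ IsUpperSet A ∧
      (k.1 : X) ∈ A ∧ A ⊆ W' := by
    rintro ⟨k, hk⟩
    have hc : (k : X) ∈ closure W' := hUcl (h2 hk)
    exact exists_clopen_upper_of_mem_open hX hWo hWu (mem_of_mem_closure k.2 hWu hc)
  choose A hA1 hA2 hA3 hA4 using hmem
  have hcov : K ⊆ ⋃ k : K, ((↑) : localicPart X → X) ⁻¹' A k := fun k hk =>
    Set.mem_iUnion.2 ⟨⟨k, hk⟩, hA3 ⟨k, hk⟩⟩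
  obtain ⟨t, ht⟩ := hK.elim_finite_subcover _
    (fun k => (htY _).2 ⟨A k, hA1 k, hA2 k, rfl⟩) hcov
  have hVA : V ∩ localicPart X ⊆ ⋃ k ∈ t, A k := by
    rintro x ⟨hxV, hxY⟩
    have hxK : (⟨x, hxY⟩ : localicPart X) ∈ K := h1 hxV
    obtain ⟨k, hkt, hk⟩ := Set.mem_iUnion₂.1 (ht hxK)
    exact Set.mem_iUnion₂.2 ⟨k, hkt, hk⟩
  have hsub : V ⊆ ⋃ k ∈ t, A k := subset_of_inter_localic_subset hsp hV.2
    (isClopen_biUnion_finset fun k _ => hA1 k).1 hVA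
  exact hsub.trans (Set.iUnion₂_subset fun k _ => hA4 k)

/-- Under local compactness of the localic part, each way-below pair admits a
compact saturated set in between. -/
lemma exists_compactsat_of_wb (hX : IsLSpace X) (hsp : Dense (localicPart X))
    (htY : ∀ U : Set (localicPart X), @IsOpen _ tY U ↔
      ∃ V : Set X, IsClopen V ∧ IsUpperSet V ∧ U = ((↑) : localicPart X → X) ⁻¹' V)
    (hloc : ∀ Vo : Set (localicPart X), @IsOpen _ tY Vo → ∀ y ∈ Vo,
      ∃ W K : Set (localicPart X), @IsOpen _ tY W ∧ @IsCompact _ tY K ∧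
        y ∈ W ∧ W ⊆ K ∧ K ⊆ Vo)
    {V' U : Set X} (hV' : IsClopen V') (hU : IsClopen U) (hUu : IsUpperSet U)
    (hw : WayBelowSet V' U) :
    ∃ K : Set (localicPart X), @IsCompact _ tY K ∧
      (∃ 𝒰 : Set (Set (localicPart X)), (∀ O ∈ 𝒰, @IsOpen _ tY O) ∧ K = ⋂₀ 𝒰) ∧
      ((↑) : localicPart X → X) ⁻¹' V' ⊆ K ∧
      K ⊆ ((↑) : localicPart X → X) ⁻¹' U := by
  haveI := hX.compact
  have hUo : @IsOpen _ tY (((↑) : localicPart X → X) ⁻¹' U) :=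
    (htY _).2 ⟨U, hU, hUu, rfl⟩
  have hz : ∀ z : (((↑) : localicPart X → X) ⁻¹' U),
      ∃ (B : Set X) (Kz : Set (localicPart X)),
      IsClopen B ∧ IsUpperSet B ∧ @IsCompact _ tY Kz ∧
      z.1 ∈ ((↑) : localicPart X → X) ⁻¹' B ∧
      ((↑) : localicPart X → X) ⁻¹' B ⊆ Kz ∧
      Kz ⊆ ((↑) : localicPart X → X) ⁻¹' U := by
    rintro ⟨z, hzP⟩
    obtain ⟨W, Kz, hWo, hKz, hzW, hWK, hKP⟩ := hloc _ hUo z hzP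
    obtain ⟨B, hB, hBu, rfl⟩ := (htY W).1 hWo
    exact ⟨B, Kz, hB, hBu, hKz, hzW, hWK, hKP⟩
  choose B Kz hB hBu hKz hzB hBK hKP using hz
  have hUcl : U ⊆ closure (⋃ z, B z) := by
    refine (subset_closure_inter hsp hU.2).trans (closure_mono ?_)
    rintro x ⟨hxU, hxY⟩
    exact Set.mem_iUnion.2 ⟨⟨⟨x, hxY⟩, hxU⟩, hzB ⟨⟨x, hxY⟩, hxU⟩⟩
  have hVsub : V' ⊆ ⋃ z, B z := hw _ (isOpen_iUnion fun z => (hB z).2)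
    (isUpperSet_iUnion fun z => hBu z) hUcl
  obtain ⟨t, ht⟩ := hV'.1.isCompact.elim_finite_subcover _ (fun z => (hB z).2) hVsub
  have hK0c : @IsCompact _ tY (⋃ z ∈ t, Kz z) :=
    t.finite_toSet.isCompact_biUnion (fun z _ => hKz z)
  have hVK0 : ((↑) : localicPart X → X) ⁻¹' V' ⊆ ⋃ z ∈ t, Kz z := by
    intro y hy
    obtain ⟨z, hzt, hzB'⟩ := Set.mem_iUnion₂.1 (ht hy)
    exact Set.mem_iUnion₂.2 ⟨z, hzt, hBK z hzB'⟩
  have hK0P : (⋃ z ∈ t, Kz z) ⊆ ((↑) : localicPart X → X) ⁻¹' U :=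
    Set.iUnion₂_subset fun z _ => hKP z
  have hK0sat : (⋃ z ∈ t, Kz z) ⊆
      ⋂₀ {O : Set (localicPart X) | @IsOpen _ tY O ∧ (⋃ z ∈ t, Kz z) ⊆ O} :=
    fun y hy O hO => hO.2 hy
  have hsatP : ⋂₀ {O : Set (localicPart X) | @IsOpen _ tY O ∧ (⋃ z ∈ t, Kz z) ⊆ O} ⊆
      ((↑) : localicPart X → X) ⁻¹' U := fun y hy => hy _ ⟨hUo, hK0P⟩
  have hKsatc : @IsCompact _ tY
      (⋂₀ {O : Set (localicPart X) | @IsOpen _ tY O ∧ (⋃ z ∈ t, Kz z) ⊆ O}) := by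
    apply isCompact_of_finite_subcover
    intro ιo Uo hUoo hcov
    obtain ⟨t', ht'⟩ := hK0c.elim_finite_subcover Uo hUoo (hK0sat.trans hcov)
    refine ⟨t', fun y hy => hy _ ⟨?_, ht'⟩⟩
    exact isOpen_biUnion fun i _ => hUoo i
  exact ⟨_, hKsatc,
    ⟨{O : Set (localicPart X) | @IsOpen _ tY O ∧ (⋃ z ∈ t, Kz z) ⊆ O},
      fun O hO => hO.1, rfl⟩, hVK0.trans hK0sat, hsatP⟩

end Yside2

end LSpaceAux

end Aux

/-- An SL-space is a Scott-stable CL-space iff its localic part is locally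
compact and coherent (intersections of two compact saturated sets are compact). -/
theorem scottStable_CLSpace_iff_stablyLocallyCompact {X : Type*}
    [TopologicalSpace X] [PartialOrder X]
    (hX : IsLSpace X) (hsp : Dense (localicPart X))
    (tY : TopologicalSpace (localicPart X))
    (htY : ∀ U : Set (localicPart X), @IsOpen _ tY U ↔
      ∃ V : Set X, IsClopen V ∧ IsUpperSet V ∧ U = ((↑) : localicPart X → X) ⁻¹' V) :
    (IsCLSpace X ∧ ScottStable X) ↔
      ((∀ V : Set (localicPart X), @IsOpen _ tY V → ∀ y ∈ V,
          ∃ W K : Set (localicPart X), @IsOpen _ tY W ∧ @IsCompact _ tY K ∧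
            y ∈ W ∧ W ⊆ K ∧ K ⊆ V) ∧
       (∀ K J : Set (localicPart X),
          @IsCompact _ tY K →
          (∃ 𝒰 : Set (Set (localicPart X)), (∀ V ∈ 𝒰, @IsOpen _ tY V) ∧ K = ⋂₀ 𝒰) →
          @IsCompact _ tY J →
          (∃ 𝒰 : Set (Set (localicPart X)), (∀ V ∈ 𝒰, @IsOpen _ tY V) ∧ J = ⋂₀ 𝒰) →
          @IsCompact _ tY (K ∩ J))) := by
  constructor
  · rintro ⟨⟨_, hCL⟩, hSS⟩
    constructor
    · intro Vo hVo y hyV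
      obtain ⟨U, hU, hUu, rfl⟩ := (htY _).1 hVo
      have hyU : (y : X) ∈ U := hyV
      have hker : (y : X) ∈ kernelSet U :=
        LSpaceAux.mem_of_mem_closure y.2 (LSpaceAux.kernelSet_isUpperSet U)
          (hCL U hU hUu hyU)
      obtain ⟨V₀, ⟨hV₀, hV₀u, hV₀w⟩, hyV₀⟩ := hker
      obtain ⟨F, hF, hVF, hFU⟩ :=
        LSpaceAux.exists_scottUpset_between hX hCL hV₀ hU hUu hV₀w
      exact ⟨((↑) : localicPart X → X) ⁻¹' V₀, ((↑) : localicPart X → X) ⁻¹' F,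
        (htY _).2 ⟨V₀, hV₀, hV₀u, rfl⟩, LSpaceAux.compact_pre tY hX htY hF, hyV₀,
        fun z hz => hVF hz, fun z hz => hFU hz⟩
    · intro K J hK hsatK hJ hsatJ
      obtain ⟨hFK, hFKeq⟩ := LSpaceAux.scottUpset_of_compact_saturated tY hX htY hK hsatK
      obtain ⟨hFJ, hFJeq⟩ := LSpaceAux.scottUpset_of_compact_saturated tY hX htY hJ hsatJ
      have hint := LSpaceAux.compact_pre tY hX htY (hSS _ _ hFK hFJ)
      rwa [Set.preimage_inter, hFKeq, hFJeq] at hint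
  · rintro ⟨hloc, hcoh⟩
    have hCL : ∀ U : Set X, IsClopen U → IsUpperSet U → U ⊆ closure (kernelSet U) := by
      intro U hU hUu
      have hsub : U ∩ localicPart X ⊆ kernelSet U := by
        rintro x ⟨hxU, hxY⟩
        have hmem : (⟨x, hxY⟩ : localicPart X) ∈ ((↑) : localicPart X → X) ⁻¹' U := hxU
        obtain ⟨W, K, hWo, hK, hyW, hWK, hKU⟩ :=
          hloc _ ((htY _).2 ⟨U, hU, hUu, rfl⟩) _ hmem
        obtain ⟨V₀, hV₀, hV₀u, rfl⟩ := (htY W).1 hWo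
        exact ⟨V₀, ⟨hV₀, hV₀u,
          LSpaceAux.wb_of_compact_between tY hX hsp htY hV₀ hK hWK hKU⟩, hyW⟩
      exact (LSpaceAux.subset_closure_inter hsp hU.2).trans (closure_mono hsub)
    refine ⟨⟨hX, hCL⟩, ?_⟩
    intro F G hF hG
    haveI := hX.compact
    apply LSpaceAux.scottUpset_of_dagger hX (hF.1.inter hG.1) (hF.2.1.inter hG.2.1)
    intro W hWo hWu hcl
    obtain ⟨A, B, hA, hAu, hFA, hB, hBu, hGB, hABW⟩ :=
      LSpaceAux.exists_clopen_pair hX hF.1 hF.2.1 hG.1 hG.2.1 hWo hWu hcl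
    have hFker : F ⊆ kernelSet A :=
      LSpaceAux.dagger_of_scottUpset hX hF (LSpaceAux.kernelSet_isOpen A)
        (LSpaceAux.kernelSet_isUpperSet A) (hFA.trans (hCL A hA hAu))
    obtain ⟨A', hA', hA'u, hFA', hwA⟩ := LSpaceAux.shrink hX hF.1 hFker
    have hGker : G ⊆ kernelSet B :=
      LSpaceAux.dagger_of_scottUpset hX hG (LSpaceAux.kernelSet_isOpen B)
        (LSpaceAux.kernelSet_isUpperSet B) (hGB.trans (hCL B hB hBu))
    obtain ⟨B', hB', hB'u, hGB', hwB⟩ := LSpaceAux.shrink hX hG.1 hGker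
    obtain ⟨KA, hKA, hKAsat, hA'K, hKA2⟩ :=
      LSpaceAux.exists_compactsat_of_wb tY hX hsp htY hloc hA' hA hAu hwA
    obtain ⟨KB, hKB, hKBsat, hB'K, hKB2⟩ :=
      LSpaceAux.exists_compactsat_of_wb tY hX hsp htY hloc hB' hB hBu hwB
    have hKcap := hcoh KA KB hKA hKAsat hKB hKBsat
    have hwAB : WayBelowSet (A' ∩ B') (A ∩ B) := by
      apply LSpaceAux.wb_of_compact_between tY hX hsp htY (hA'.inter hB') hKcap
      · rw [Set.preimage_inter]
        exact Set.inter_subset_inter hA'K hB'K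
      · rw [Set.preimage_inter]
        exact Set.inter_subset_inter hKA2 hKB2
    exact (Set.inter_subset_inter hFA' hGB').trans (hwAB W hWo hWu hABW)
end

section
/- Let X be an L-space with localic part Y. If X is L-compact, then Y is compact (with the localic-part topology). If in addition X is L-spatial, then the converse also holds: Y compact implies X is L-compact. -/
open Set Topology

private theorem exists_minimal_le_aux {X : Type*} [TopologicalSpace X] [PartialOrder X]
    (hP : ∀ x y : X, ¬ x ≤ y →
      ∃ U : Set X, IsClopen U ∧ IsUpperSet U ∧ x ∈ U ∧ y ∉ U)
    [CompactSpace X] :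
    ∀ x : X, ∃ m, m ≤ x ∧ ∀ y, y ≤ m → y = m := by
  have hIic : ∀ c : X, IsClosed (Set.Iic c) := by
    intro c
    rw [← isOpen_compl_iff, isOpen_iff_mem_nhds]
    intro z hz
    obtain ⟨U, hU, hUp, hzU, hcU⟩ := hP z c hz
    refine Filter.mem_of_superset (hU.2.mem_nhds hzU) fun w hw hwc => ?_
    exact hcU (hUp hwc hw)
  intro x
  set S : Set (Set X) := (fun y => Set.Iic y) '' Set.Iic x with hS
  have key : ∀ c ⊆ S, IsChain (· ⊆ ·) c → c.Nonempty → ∃ lb ∈ S, ∀ s ∈ c, lb ⊆ s := by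
    intro c hcS hchain hcne
    haveI : Nonempty c := hcne.to_subtype
    have hdir : DirectedOn (· ⊇ ·) c := by
      intro a ha b hb
      rcases hchain.total ha hb with h | h
      · exact ⟨a, ha, Set.Subset.rfl, h⟩
      · exact ⟨b, hb, h, Set.Subset.rfl⟩
    have hne : ∀ U ∈ c, U.Nonempty := by
      rintro U hU; obtain ⟨y, -, rfl⟩ := hcS hU; exact ⟨y, le_rfl⟩
    have hcomp : ∀ U ∈ c, IsCompact U := by
      rintro U hU; obtain ⟨y, -, rfl⟩ := hcS hU; exact (hIic y).isCompact
    have hcl : ∀ U ∈ c, IsClosed U := by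
      rintro U hU; obtain ⟨y, -, rfl⟩ := hcS hU; exact hIic y
    obtain ⟨w, hw⟩ :=
      IsCompact.nonempty_sInter_of_directed_nonempty_isCompact_isClosed hdir hne hcomp hcl
    obtain ⟨s₀, hs₀⟩ := hcne
    obtain ⟨y₀, hy₀x, rfl⟩ := hcS hs₀
    have hwy₀ : w ≤ y₀ := Set.mem_sInter.1 hw _ hs₀
    refine ⟨Set.Iic w, ⟨w, hwy₀.trans hy₀x, rfl⟩, ?_⟩
    intro s hs
    obtain ⟨y, -, rfl⟩ := hcS hs
    exact Set.Iic_subset_Iic.2 (Set.mem_sInter.1 hw _ hs)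
  obtain ⟨m', hm'sub, hm'min⟩ :=
    zorn_superset_nonempty S key (Set.Iic x) ⟨x, le_rfl, rfl⟩
  obtain ⟨m, hmx, rfl⟩ := hm'min.1
  refine ⟨m, hmx, fun y hy => ?_⟩
  have : Set.Iic y = Set.Iic m :=
    Set.Subset.antisymm (Set.Iic_subset_Iic.2 hy)
      (hm'min.2 ⟨y, hy.trans hmx, rfl⟩ (Set.Iic_subset_Iic.2 hy))
  exact le_antisymm hy (Set.Iic_subset_Iic.1 this.ge)

/-- If an L-space is L-compact then its localic part is compact; if moreover
the L-space is L-spatial, the converse holds. -/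
theorem lCompact_iff_localicPart_compact {X : Type*} [TopologicalSpace X] [PartialOrder X]
    (hX : IsLSpace X)
    (tY : TopologicalSpace (localicPart X))
    (htY : ∀ U : Set (localicPart X), @IsOpen _ tY U ↔
      ∃ V : Set X, IsClopen V ∧ IsUpperSet V ∧ U = ((↑) : localicPart X → X) ⁻¹' V) :
    (IsLCompact X → @CompactSpace (localicPart X) tY) ∧
    (Dense (localicPart X) → @CompactSpace (localicPart X) tY → IsLCompact X) := by
  haveI : CompactSpace X := hX.compact
  constructor
  · intro hLC
    refine @CompactSpace.mk _ tY ?_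
    rw [@isCompact_iff_finite_subcover _ tY]
    intro ι U hUopen hcover
    choose V hVclopen hVupper hUV using fun i => (htY (U i)).1 (hUopen i)
    have hXcover : (Set.univ : Set X) ⊆ ⋃ i, V i := by
      intro x _
      obtain ⟨m, hmx, hmmin⟩ := exists_minimal_le_aux hX.priestley x
      have hmY : m ∈ localicPart X := hLC m hmmin
      have hmem : (⟨m, hmY⟩ : localicPart X) ∈ ⋃ i, U i := hcover (Set.mem_univ _)
      obtain ⟨i, hi⟩ := Set.mem_iUnion.1 hmem
      rw [hUV i] at hi
      exact Set.mem_iUnion.2 ⟨i, hVupper i hmx hi⟩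
    obtain ⟨t, ht⟩ :=
      isCompact_univ.elim_finite_subcover V (fun i => (hVclopen i).2) hXcover
    refine ⟨t, fun y _ => ?_⟩
    have : (y : X) ∈ ⋃ i ∈ t, V i := ht (Set.mem_univ _)
    obtain ⟨i, hit, hi⟩ := by simpa using this
    exact Set.mem_iUnion₂.2 ⟨i, hit, by rw [hUV i]; exact hi⟩
  · intro hdense hcomp x hxmin
    by_contra hxY
    have hcov : ∀ y : localicPart X,
        ∃ V : Set X, IsClopen V ∧ IsUpperSet V ∧ (y : X) ∈ V ∧ x ∉ V := by
      rintro ⟨y, hy⟩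
      have hne : ¬ y ≤ x := fun h => hxY (by rw [← hxmin y h]; exact hy)
      exact hX.priestley y x hne
    choose V hVc hVu hyV hxV using hcov
    have hYcomp : @IsCompact _ tY (Set.univ : Set (localicPart X)) :=
      @isCompact_univ _ tY hcomp
    obtain ⟨t, ht⟩ := @IsCompact.elim_finite_subcover (localicPart X) tY _ _ hYcomp
      (fun y => ((↑) : localicPart X → X) ⁻¹' V y)
      (fun y => (htY _).2 ⟨V y, hVc y, hVu y, rfl⟩)
      (fun y _ => Set.mem_iUnion.2 ⟨y, hyV y⟩)
    set W : Set X := ⋃ y ∈ t, V y with hW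
    have hxW : x ∉ W := by
      simp only [hW, Set.mem_iUnion]
      rintro ⟨y, -, hy⟩
      exact hxV y hy
    have hYW : localicPart X ⊆ W := by
      intro z hz
      have := ht (Set.mem_univ (⟨z, hz⟩ : localicPart X))
      obtain ⟨y, hyt, hy⟩ := Set.mem_iUnion₂.1 this
      exact Set.mem_iUnion₂.2 ⟨y, hyt, hy⟩
    have hWclosed : IsClosed W :=
      Set.Finite.isClosed_biUnion t.finite_toSet (fun y _ => (hVc y).1)
    obtain ⟨z, hzW, hzY⟩ :=
      hdense.inter_open_nonempty Wᶜ hWclosed.isOpen_compl ⟨x, hxW⟩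
    exact hzW (hYW hzY)
end

section
/- Let X be an L-space with localic part Y and U a clopen upper set of X. The following three conditions are equivalent: (1) U ∩ Y ⊆ reg U; (2) for each y ∈ U ∩ Y there are disjoint clopen upper sets V, W with y ∈ V and X∖U ⊆ W; (3) ↓↑(U ∩ Y) ⊆ U. Moreover, condition (4) 'reg U is dense in U' implies (1)–(3), and if X is L-spatial then all four conditions are equivalent. -/
open Set Topology

lemma regPart_isUpperSet {X : Type*} [TopologicalSpace X] [PartialOrder X]
    (U : Set X) : IsUpperSet (regPart U) := by
  apply isUpperSet_sUnion
  exact fun V hV => hV.2.1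

/-- In a compact Priestley space, the upward closure of a closed set is
closed. -/
lemma upperClosure_isClosed {X : Type*} [TopologicalSpace X] [PartialOrder X]
    (hX : IsLSpace X) {C : Set X} (hC : IsClosed C) :
    IsClosed (upperClosure C : Set X) := by
  haveI := hX.compact
  rw [← isOpen_compl_iff]
  rw [isOpen_iff_forall_mem_open]
  intro x hx
  have hx' : ∀ c ∈ C, ¬ c ≤ x := by
    intro c hc hle
    exact hx ⟨c, hc, hle⟩
  choose! W hWc hWu hWmem hWx using fun c (hc : c ∈ C) => hX.priestley c x (hx' c hc)
  have hcov : C ⊆ ⋃ c : C, W c := fun c hc =>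
    Set.mem_iUnion.2 ⟨⟨c, hc⟩, hWmem c hc⟩
  obtain ⟨t, ht⟩ := hC.isCompact.elim_finite_subcover (fun c : C => W c)
    (fun c => (hWc c c.2).isOpen) hcov
  refine ⟨(⋃ c ∈ t, W c)ᶜ, ?_, ?_, ?_⟩
  · rw [Set.compl_subset_compl]
    rintro z ⟨c, hc, hcz⟩
    obtain ⟨i, hi, hzi⟩ := Set.mem_iUnion₂.1 (ht hc)
    exact Set.mem_iUnion₂.2 ⟨i, hi, hWu i i.2 hcz hzi⟩
  · exact (t.finite_toSet.isClosed_biUnion fun (i : C) _ => (hWc i i.2).isClosed).isOpen_compl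
  · intro h
    obtain ⟨i, _, hxi⟩ := Set.mem_iUnion₂.1 h
    exact hWx i i.2 hxi

/-- In a compact Priestley space, a point not below any element of a closed
set `G` can be put in a clopen upper set disjoint from `G`. -/
lemma exists_clopen_upper_disjoint {X : Type*} [TopologicalSpace X] [PartialOrder X]
    (hX : IsLSpace X) {y : X} {G : Set X} (hG : IsClosed G)
    (h : ∀ g ∈ G, ¬ y ≤ g) :
    ∃ V : Set X, IsClopen V ∧ IsUpperSet V ∧ y ∈ V ∧ Disjoint V G := by
  haveI := hX.compact
  choose! V hVc hVu hVmem hVg using fun g (hg : g ∈ G) => hX.priestley y g (h g hg)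
  have hcov : G ⊆ ⋃ g : G, (V g)ᶜ := fun g hg =>
    Set.mem_iUnion.2 ⟨⟨g, hg⟩, hVg g hg⟩
  obtain ⟨t, ht⟩ := hG.isCompact.elim_finite_subcover (fun g : G => (V g)ᶜ)
    (fun g => (hVc g g.2).isClosed.isOpen_compl) hcov
  refine ⟨⋂ g ∈ t, V g, ?_, ?_, ?_, ?_⟩
  · exact isClopen_biInter_finset fun g _ => hVc g g.2
  · exact isUpperSet_iInter₂ fun g _ => hVu g g.2
  · exact Set.mem_iInter₂.2 fun g _ => hVmem g g.2
  · rw [Set.disjoint_left]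
    intro z hz hzG
    obtain ⟨i, hi, hzi⟩ := Set.mem_iUnion₂.1 (ht hzG)
    exact hzi (Set.mem_iInter₂.1 hz i hi)

/-- Conditions (1)–(3) are equivalent for a clopen upper set `U` of an L-space,
(4) implies each of them, and for L-spatial spaces all four are equivalent:
(1) `U ∩ Y ⊆ reg U`;
(2) each `y ∈ U ∩ Y` is separated from `Uᶜ` by disjoint clopen upper sets;
(3) `↓↑(U ∩ Y) ⊆ U`;
(4) `reg U` is dense in `U`. -/
theorem regPart_conditions {X : Type*} [TopologicalSpace X] [PartialOrder X]
    (hX : IsLSpace X) (U : Set X) (hU : IsClopen U) (hUup : IsUpperSet U) :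
    ((U ∩ localicPart X ⊆ regPart U) ↔
      (∀ y ∈ U ∩ localicPart X, ∃ V W : Set X,
        IsClopen V ∧ IsUpperSet V ∧ IsClopen W ∧ IsUpperSet W ∧
        Disjoint V W ∧ y ∈ V ∧ Uᶜ ⊆ W)) ∧
    ((U ∩ localicPart X ⊆ regPart U) ↔
      (lowerClosure (upperClosure (U ∩ localicPart X) : Set X) : Set X) ⊆ U) ∧
    (U ⊆ closure (regPart U) → U ∩ localicPart X ⊆ regPart U) ∧
    (Dense (localicPart X) →
      (U ∩ localicPart X ⊆ regPart U → U ⊆ closure (regPart U))) := by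
  have h12 : (U ∩ localicPart X ⊆ regPart U) ↔
      (∀ y ∈ U ∩ localicPart X, ∃ V W : Set X,
        IsClopen V ∧ IsUpperSet V ∧ IsClopen W ∧ IsUpperSet W ∧
        Disjoint V W ∧ y ∈ V ∧ Uᶜ ⊆ W) := by
    constructor
    · intro h y hy
      obtain ⟨V, ⟨hVc, hVu, hVlow⟩, hyV⟩ := Set.mem_sUnion.1 (h hy)
      refine ⟨V, (lowerClosure V : Set X)ᶜ, hVc, hVu,
        (hX.esakia V hVc).compl, (lowerClosure V).lower.compl, ?_, hyV, ?_⟩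
      · rw [Set.disjoint_left]
        intro a haV ha
        exact ha (subset_lowerClosure haV)
      · exact Set.compl_subset_compl.2 hVlow
    · intro h y hy
      obtain ⟨V, W, hVc, hVu, _, hWu, hd, hyV, hUW⟩ := h y hy
      refine Set.mem_sUnion.2 ⟨V, ⟨hVc, hVu, ?_⟩, hyV⟩
      rintro x ⟨v, hvV, hxv⟩
      by_contra hxU
      exact Set.disjoint_left.1 hd hvV (hWu hxv (hUW hxU))
  have h13 : (U ∩ localicPart X ⊆ regPart U) ↔
      (lowerClosure (upperClosure (U ∩ localicPart X) : Set X) : Set X) ⊆ U := by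
    constructor
    · intro h x hx
      obtain ⟨z, ⟨y, hy, hyz⟩, hxz⟩ := hx
      obtain ⟨V, ⟨hVc, hVu, hVlow⟩, hyV⟩ := Set.mem_sUnion.1 (h hy)
      exact hVlow ⟨z, hVu hyz hyV, hxz⟩
    · intro h y hy
      have hGclosed : IsClosed (upperClosure Uᶜ : Set X) :=
        upperClosure_isClosed hX hU.compl.isClosed
      have hyG : ∀ g ∈ (upperClosure Uᶜ : Set X), ¬ y ≤ g := by
        rintro g ⟨c, hc, hcg⟩ hyg
        exact hc (h ⟨g, ⟨y, hy, hyg⟩, hcg⟩)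
      obtain ⟨V, hVc, hVu, hyV, hd⟩ := exists_clopen_upper_disjoint hX hGclosed hyG
      refine Set.mem_sUnion.2 ⟨V, ⟨hVc, hVu, ?_⟩, hyV⟩
      rintro x ⟨v, hvV, hxv⟩
      by_contra hxU
      exact Set.disjoint_left.1 hd hvV ⟨x, hxU, hxv⟩
  refine ⟨h12, h13, ?_, ?_⟩
  · rintro h y ⟨hyU, hyY⟩
    have hyc : y ∈ closure (regPart U) := h hyU
    obtain ⟨x, hx1, hx2⟩ := _root_.mem_closure_iff.1 hyc (Set.Iic y) hyY.isOpen le_rfl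
    exact regPart_isUpperSet U hx1 hx2
  · intro hd h1 u hu
    rw [_root_.mem_closure_iff]
    intro o ho huo
    obtain ⟨x, hxY, hxoU⟩ := hd.exists_mem_open (ho.inter hU.isOpen) ⟨u, huo, hu⟩
    exact ⟨x, hxoU.1, h1 ⟨hxoU.2, hxY⟩⟩
end

section
/- Every KRL-space X is L-spatial, and its localic part Y is compact (with the localic-part topology). -/
open Set Topology

section Aux

variable {X : Type*} [TopologicalSpace X] [PartialOrder X]

lemma isClosed_Iic_of_priestley
    (hp : ∀ x y : X, ¬ x ≤ y → ∃ U : Set X, IsClopen U ∧ IsUpperSet U ∧ x ∈ U ∧ y ∉ U)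
    (y : X) : IsClosed (Set.Iic y) := by
  rw [← isOpen_compl_iff, isOpen_iff_forall_mem_open]
  intro x hx
  obtain ⟨U, hU, hUp, hxU, hyU⟩ := hp x y hx
  exact ⟨U, fun z hz hzy => hyU (hUp hzy hz), hU.isOpen, hxU⟩

lemma exists_min_le [CompactSpace X]
    (hcl : ∀ y : X, IsClosed (Set.Iic y)) (x : X) :
    ∃ y, y ≤ x ∧ ∀ z, z ≤ y → z = y := by
  have key : ∀ c : Set Xᵒᵈ, c ⊆ {y : Xᵒᵈ | OrderDual.ofDual y ≤ x} → IsChain (· ≤ ·) c →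
      ∀ y ∈ c, ∃ ub ∈ {y : Xᵒᵈ | OrderDual.ofDual y ≤ x}, ∀ z ∈ c, z ≤ ub := by
    intro c hcs hc y hy
    have hne : Nonempty c := ⟨⟨y, hy⟩⟩
    have hdir : Directed (· ⊇ ·) (fun z : c => Set.Iic (OrderDual.ofDual (z : Xᵒᵈ))) := by
      intro a b
      rcases eq_or_ne (a : Xᵒᵈ) (b : Xᵒᵈ) with h | h
      · exact ⟨a, by simp [h], by simp [h]⟩
      · rcases hc a.2 b.2 h with h' | h'
        · exact ⟨b, fun t ht => le_trans ht h', fun t ht => ht⟩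
        · exact ⟨a, fun t ht => ht, fun t ht => le_trans ht h'⟩
    obtain ⟨lb, hlb⟩ := IsCompact.nonempty_iInter_of_directed_nonempty_isCompact_isClosed
      (fun z : c => Set.Iic (OrderDual.ofDual (z : Xᵒᵈ))) hdir (fun z => ⟨_, le_rfl⟩)
      (fun z => (hcl _).isCompact) (fun z => hcl _)
    simp only [Set.mem_iInter, Set.mem_Iic] at hlb
    exact ⟨OrderDual.toDual lb, le_trans (hlb ⟨y, hy⟩) (hcs hy), fun z hz => hlb ⟨z, hz⟩⟩
  obtain ⟨m, hxm, hm⟩ := zorn_le_nonempty₀ (α := Xᵒᵈ)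
    {y : Xᵒᵈ | OrderDual.ofDual y ≤ x} key (OrderDual.toDual x) le_rfl
  refine ⟨OrderDual.ofDual m, hm.1, fun z hz => ?_⟩
  exact le_antisymm hz (hm.2 (le_trans hz hm.1) hz)

/-- Clopen "boxes" `U ∩ D` (clopen upper set ∩ clopen lower set) form a basis. -/
lemma exists_clopen_box (hX : IsLSpace X) {W : Set X} (hW : IsOpen W) {x : X} (hx : x ∈ W) :
    ∃ U D : Set X, IsClopen U ∧ IsUpperSet U ∧ IsClopen D ∧ IsLowerSet D ∧
      x ∈ U ∩ D ∧ U ∩ D ⊆ W := by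
  classical
  haveI := hX.compact
  have hsep : ∀ z : X, z ∈ Wᶜ → ∃ S : Set X, IsClopen S ∧ (IsUpperSet S ∨ IsLowerSet S)
      ∧ x ∈ S ∧ z ∉ S := by
    intro z hz
    by_cases h : x ≤ z
    · have h2 : ¬ z ≤ x := fun h2 => hz (le_antisymm h2 h ▸ hx)
      obtain ⟨U, hU, hUp, hzU, hxU⟩ := hX.priestley z x h2
      exact ⟨Uᶜ, hU.compl, Or.inr hUp.compl,
        hxU, not_not_intro hzU⟩
    · obtain ⟨U, hU, hUp, hxU, hzU⟩ := hX.priestley x z h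
      exact ⟨U, hU, Or.inl hUp, hxU, hzU⟩
  choose! S hSc hSud hxS hzS using hsep
  have hKc : IsCompact (Wᶜ) := (hW.isClosed_compl).isCompact
  have hcover : Wᶜ ⊆ ⋃ z : (Wᶜ : Set X), (S z)ᶜ := fun z hz =>
    Set.mem_iUnion.2 ⟨⟨z, hz⟩, hzS z hz⟩
  obtain ⟨t, ht⟩ := hKc.elim_finite_subcover (fun z : (Wᶜ : Set X) => (S z)ᶜ)
    (fun z => (hSc z z.2).compl.isOpen) hcover
  refine ⟨⋂ z ∈ t, (if IsUpperSet (S z) then S z else Set.univ),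
    ⋂ z ∈ t, (if IsUpperSet (S z) then Set.univ else S z), ?_, ?_, ?_, ?_, ?_, ?_⟩
  · exact isClopen_biInter_finset fun z hz => by
      split <;> [exact hSc z z.2; exact isClopen_univ]
  · exact isUpperSet_iInter₂ fun z hz => by
      split <;> [assumption; exact isUpperSet_univ]
  · exact isClopen_biInter_finset fun z hz => by
      split <;> [exact isClopen_univ; exact hSc z z.2]
  · refine isLowerSet_iInter₂ fun z hz => ?_
    split
    · exact isLowerSet_univ
    · next h => exact (hSud z z.2).resolve_left h
  · constructor <;>
      refine Set.mem_iInter₂.2 fun z hz => ?_ <;>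
      · split <;> first | exact hxS z z.2 | exact Set.mem_univ x
  · intro w hw
    by_contra hwW
    obtain ⟨z, hzt, hz⟩ := Set.mem_iUnion₂.1 (ht hwW)
    have h1 := Set.mem_iInter₂.1 hw.1 z hzt
    have h2 := Set.mem_iInter₂.1 hw.2 z hzt
    by_cases h : IsUpperSet (S z)
    · rw [if_pos h] at h1; exact hz h1
    · rw [if_neg h] at h2; exact hz h2

end Aux

/-- Every KRL-space (L-compact L-regular L-space) is L-spatial and its localic
part is compact in the localic-part topology. -/
theorem krlSpace_lSpatial_and_compact {X : Type*} [TopologicalSpace X] [PartialOrder X]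
    (hX : IsLSpace X) (hk : IsLCompact X) (hr : IsLRegular X)
    (tY : TopologicalSpace (localicPart X))
    (htY : ∀ U : Set (localicPart X), @IsOpen _ tY U ↔
      ∃ V : Set X, IsClopen V ∧ IsUpperSet V ∧ U = ((↑) : localicPart X → X) ⁻¹' V) :
    Dense (localicPart X) ∧ @CompactSpace (localicPart X) tY := by
  haveI := hX.compact
  have hcl : ∀ y : X, IsClosed (Set.Iic y) := isClosed_Iic_of_priestley hX.priestley
  have hdense : Dense (localicPart X) := by
    rw [dense_iff_inter_open]
    rintro W hW ⟨x, hx⟩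
    obtain ⟨U, D, hUc, hUu, hDc, hDl, ⟨hxU, hxD⟩, hsub⟩ := exists_clopen_box hX hW hx
    have hxcl : x ∈ closure (regPart U) := hr U hUc hUu hxU
    obtain ⟨x', hx'W, hx'r⟩ := (mem_closure_iff.1 hxcl) (U ∩ D) (hUc.isOpen.inter hDc.isOpen)
      ⟨hxU, hxD⟩
    obtain ⟨V, ⟨hVc, hVu, hVd⟩, hx'V⟩ := hx'r
    obtain ⟨y, hyx', hymin⟩ := exists_min_le hcl x'
    have hyY : y ∈ localicPart X := hk y hymin
    have hyU : y ∈ U := hVd (mem_lowerClosure.2 ⟨x', hx'V, hyx'⟩)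
    exact ⟨y, ⟨hsub ⟨hyU, hDl hyx' hx'W.2⟩, hyY⟩⟩
  refine ⟨hdense, ?_⟩
  letI := tY
  refine ⟨isCompact_of_finite_subcover fun {ι} Us hUs hcover => ?_⟩
  choose V hVc hVu hVe using fun i => (htY (Us i)).1 (hUs i)
  have hXcover : (Set.univ : Set X) ⊆ ⋃ i, V i := by
    intro x _
    obtain ⟨y, hyx, hymin⟩ := exists_min_le hcl x
    have hyY : y ∈ localicPart X := hk y hymin
    obtain ⟨i, hi⟩ := Set.mem_iUnion.1 (hcover (Set.mem_univ (⟨y, hyY⟩ : localicPart X)))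
    rw [hVe i] at hi
    exact Set.mem_iUnion.2 ⟨i, hVu i hyx hi⟩
  obtain ⟨t, ht⟩ := IsCompact.elim_finite_subcover isCompact_univ V
    (fun i => (hVc i).isOpen) hXcover
  refine ⟨t, fun p _ => ?_⟩
  obtain ⟨i, hit, hi⟩ := Set.mem_iUnion₂.1 (ht (Set.mem_univ (p : X)))
  exact Set.mem_iUnion₂.2 ⟨i, hit, by rw [hVe i]; exact hi⟩
end

section
/- Let X be an SL-space with localic part Y. Then X is a KRL-space if and only if Y is compact and Hausdorff (with the localic-part topology). -/
open Set Topology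

section Aux

variable {X : Type*} [TopologicalSpace X] [PartialOrder X]

lemma LSaux.isClosed_Iic (hX : IsLSpace X) (y : X) : IsClosed (Set.Iic y) := by
  rw [← isOpen_compl_iff, isOpen_iff_forall_mem_open]
  intro x hx
  obtain ⟨U, hUc, hUu, hxU, hyU⟩ := hX.priestley x y hx
  exact ⟨U, fun u hu hle => hyU (hUu hle hu), hUc.isOpen, hxU⟩

lemma LSaux.exists_clopen_nhd (hX : IsLSpace X) {x : X} {O : Set X} (hO : IsOpen O)
    (hx : x ∈ O) : ∃ C : Set X, IsClopen C ∧ x ∈ C ∧ C ⊆ O := by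
  haveI := hX.compact
  have key : ∀ z : X, ∃ C : Set X, IsClopen C ∧ x ∈ C ∧ (z ∈ Oᶜ → z ∉ C) := by
    intro z
    by_cases hz : z ∈ Oᶜ
    · have hne : x ≠ z := fun h => hz (h ▸ hx)
      by_cases hle : x ≤ z
      · have hnle : ¬ z ≤ x := fun h => hne (le_antisymm hle h)
        obtain ⟨U, hUc, hUu, hzU, hxU⟩ := hX.priestley z x hnle
        exact ⟨Uᶜ, hUc.compl, hxU, fun _ h => h hzU⟩
      · obtain ⟨U, hUc, hUu, hxU, hzU⟩ := hX.priestley x z hle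
        exact ⟨U, hUc, hxU, fun _ => hzU⟩
    · exact ⟨Set.univ, isClopen_univ, trivial, fun h => absurd h hz⟩
  choose C hCc hxC hzC using key
  have hcover : Oᶜ ⊆ ⋃ z ∈ Oᶜ, (C z)ᶜ := fun z hz => Set.mem_biUnion hz (hzC z hz)
  obtain ⟨b, hbsub, hbfin, hb⟩ :=
    hO.isClosed_compl.isCompact.elim_finite_subcover_image
      (fun z _ => (hCc z).compl.isOpen) hcover
  refine ⟨⋂ z ∈ b, C z, hbfin.isClopen_biInter (fun z _ => hCc z),
    Set.mem_iInter₂.mpr (fun z _ => hxC z), ?_⟩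
  intro u hu
  by_contra huO
  obtain ⟨z, hzb, hz⟩ := Set.mem_iUnion₂.mp (hb huO)
  exact hz (Set.mem_iInter₂.mp hu z hzb)

lemma LSaux.exists_minimal (hX : IsLSpace X) {C : Set X} (hC : IsClosed C)
    {x₀ : X} (hx₀ : x₀ ∈ C) : ∃ x ∈ C, ∀ y ∈ C, y ≤ x → y = x := by
  haveI := hX.compact
  have key : ∀ c ⊆ {D : Set X | ∃ a ∈ C, D = C ∩ Set.Iic a}, IsChain (· ⊆ ·) c →
      c.Nonempty → ∃ lb ∈ {D : Set X | ∃ a ∈ C, D = C ∩ Set.Iic a}, ∀ s ∈ c, lb ⊆ s := by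
    intro c hcsub hchain hcne
    have hne : (⋂₀ c).Nonempty := by
      haveI : Nonempty c := hcne.to_subtype
      refine IsCompact.nonempty_sInter_of_directed_nonempty_isCompact_isClosed ?_ ?_ ?_ ?_
      · intro s hs t ht
        rcases hchain.total hs ht with h | h
        · exact ⟨s, hs, Set.Subset.rfl, h⟩
        · exact ⟨t, ht, h, Set.Subset.rfl⟩
      · intro s hs
        obtain ⟨a, haC, rfl⟩ := hcsub hs
        exact ⟨a, haC, le_rfl⟩
      · intro s hs
        obtain ⟨a, haC, rfl⟩ := hcsub hs
        exact (hC.inter (LSaux.isClosed_Iic hX a)).isCompact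
      · intro s hs
        obtain ⟨a, haC, rfl⟩ := hcsub hs
        exact hC.inter (LSaux.isClosed_Iic hX a)
    obtain ⟨z, hz⟩ := hne
    obtain ⟨s₀, hs₀⟩ := hcne
    have hzC : z ∈ C := by
      have hz0 := hz s₀ hs₀
      obtain ⟨a, haC, h⟩ := hcsub hs₀
      rw [h] at hz0
      exact hz0.1
    refine ⟨C ∩ Set.Iic z, ⟨z, hzC, rfl⟩, ?_⟩
    intro s hs
    have hzs := hz s hs
    obtain ⟨a, haC, rfl⟩ := hcsub hs
    exact fun u hu => ⟨hu.1, hu.2.trans hzs.2⟩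
  obtain ⟨m, -, hm⟩ := zorn_superset_nonempty _ key (C ∩ Set.Iic x₀) ⟨x₀, hx₀, rfl⟩
  obtain ⟨a, haC, rfl⟩ := hm.1
  refine ⟨a, haC, ?_⟩
  intro y hyC hya
  have hsub : C ∩ Set.Iic y ⊆ C ∩ Set.Iic a := fun u hu => ⟨hu.1, hu.2.trans hya⟩
  have hmin := hm.2 ⟨y, hyC, rfl⟩ hsub
  have haIy : a ∈ C ∩ Set.Iic y := hmin ⟨haC, le_rfl⟩
  exact le_antisymm hya haIy.2

lemma LSaux.mem_of_mem_closure_upper {y : X} (hy : y ∈ localicPart X) {W : Set X}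
    (hW : IsUpperSet W) (h : y ∈ closure W) : y ∈ W := by
  have hopen : IsOpen (Set.Iic y) := (show IsClopen (Set.Iic y) from hy).isOpen
  obtain ⟨w, hw⟩ := mem_closure_iff.mp h (Set.Iic y) hopen (Set.mem_Iic.mpr le_rfl)
  exact hW hw.1 hw.2

end Aux

/-- An SL-space is a KRL-space iff its localic part is compact Hausdorff. -/
theorem krlSpace_iff_compactHausdorff {X : Type*} [TopologicalSpace X] [PartialOrder X]
    (hX : IsLSpace X) (hsp : Dense (localicPart X))
    (tY : TopologicalSpace (localicPart X))
    (htY : ∀ U : Set (localicPart X), @IsOpen _ tY U ↔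
      ∃ V : Set X, IsClopen V ∧ IsUpperSet V ∧ U = ((↑) : localicPart X → X) ⁻¹' V) :
    (IsLCompact X ∧ IsLRegular X) ↔
      (@CompactSpace (localicPart X) tY ∧ @T2Space (localicPart X) tY) := by
  classical
  haveI := hX.compact
  letI := tY
  have hupper_reg : ∀ U : Set X, IsUpperSet (regPart U) := fun U =>
    isUpperSet_sUnion fun s hs => hs.2.1
  constructor
  · rintro ⟨hcomp, hreg⟩
    constructor
    · -- compactness of the localic part
      rw [← isCompact_univ_iff]
      refine isCompact_of_finite_subcover ?_
      intro ι Us hUs hcover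
      choose V hVc hVu hVe using fun i => (htY (Us i)).mp (hUs i)
      have hXcover : (Set.univ : Set X) ⊆ ⋃ i, V i := by
        by_contra hcon
        obtain ⟨x, -, hx⟩ := Set.not_subset.mp hcon
        obtain ⟨m, hmC, hmmin⟩ := LSaux.exists_minimal hX
          (isClosed_compl_iff.mpr (isOpen_iUnion fun i => (hVc i).isOpen))
          (hx : x ∈ (⋃ i, V i)ᶜ)
        have hmX : ∀ y : X, y ≤ m → y = m := fun y hy =>
          hmmin y (fun hyU => by
            obtain ⟨i, hi⟩ := Set.mem_iUnion.mp hyU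
            exact hmC (Set.mem_iUnion.mpr ⟨i, hVu i hy hi⟩)) hy
        have hmY := hcomp m hmX
        obtain ⟨i, hi⟩ := Set.mem_iUnion.mp (hcover (Set.mem_univ (⟨m, hmY⟩ : localicPart X)))
        rw [hVe i] at hi
        exact hmC (Set.mem_iUnion.mpr ⟨i, hi⟩)
      obtain ⟨t, ht⟩ := isCompact_univ.elim_finite_subcover V (fun i => (hVc i).isOpen) hXcover
      refine ⟨t, fun y _ => ?_⟩
      obtain ⟨i, hit, hi⟩ := Set.mem_iUnion₂.mp (ht (Set.mem_univ (y : X)))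
      exact Set.mem_iUnion₂.mpr ⟨i, hit, by rw [hVe i]; exact hi⟩
    · -- Hausdorffness of the localic part
      have sep : ∀ a b : localicPart X, ¬ (b : X) ≤ (a : X) →
          ∃ u v : Set (localicPart X), IsOpen u ∧ IsOpen v ∧ a ∈ u ∧ b ∈ v ∧ Disjoint u v := by
        intro a b hba
        have hUc : IsClopen (Set.Iic (a : X))ᶜ :=
          (show IsClopen (Set.Iic (a : X)) from a.2).compl
        have hUu : IsUpperSet (Set.Iic (a : X))ᶜ := (isLowerSet_Iic _).compl
        have hbU : (b : X) ∈ (Set.Iic (a : X))ᶜ := hba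
        have hbcl : (b : X) ∈ closure (regPart (Set.Iic (a : X))ᶜ) := hreg _ hUc hUu hbU
        have hbreg : (b : X) ∈ regPart (Set.Iic (a : X))ᶜ :=
          LSaux.mem_of_mem_closure_upper b.2 (hupper_reg _) hbcl
        obtain ⟨V, ⟨hVc, hVu, hVl⟩, hbV⟩ := Set.mem_sUnion.mp hbreg
        have haV : (a : X) ∉ (lowerClosure V : Set X) :=
          fun h => hVl h (Set.mem_Iic.mpr le_rfl)
        refine ⟨((↑) : localicPart X → X) ⁻¹' (lowerClosure V : Set X)ᶜ,
          ((↑) : localicPart X → X) ⁻¹' V, ?_, ?_, haV, hbV, ?_⟩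
        · exact (htY _).mpr ⟨_, (hX.esakia V hVc).compl, (lowerClosure V).lower.compl, rfl⟩
        · exact (htY _).mpr ⟨V, hVc, hVu, rfl⟩
        · rw [Set.disjoint_left]
          intro z hz1 hz2
          exact hz1 (subset_lowerClosure hz2)
      refine ⟨fun a b hab => ?_⟩
      by_cases hba : (b : X) ≤ (a : X)
      · have hnab : ¬ (a : X) ≤ (b : X) := fun h =>
          hab (Subtype.ext (le_antisymm h hba))
        obtain ⟨u, v, hu, hv, hbu, hav, huv⟩ := sep b a hnab
        exact ⟨v, u, hv, hu, hav, hbu, huv.symm⟩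
      · obtain ⟨u, v, hu, hv, hau, hbv, huv⟩ := sep a b hba
        exact ⟨u, v, hu, hv, hau, hbv, huv⟩
  · rintro ⟨hYcomp, hYt2⟩
    haveI := hYcomp
    haveI := hYt2
    constructor
    · -- L-compactness
      intro x hxmin
      by_contra hxY
      have key : ∀ y : localicPart X,
          ∃ V : Set X, IsClopen V ∧ IsUpperSet V ∧ (y : X) ∈ V ∧ x ∉ V := by
        intro y
        have hnle : ¬ (y : X) ≤ x := fun h => hxY ((hxmin _ h) ▸ y.2)
        exact hX.priestley (y : X) x hnle
      choose V hVc hVu hyV hxV using key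
      have hcover : (Set.univ : Set (localicPart X)) ⊆
          ⋃ y, ((↑) : localicPart X → X) ⁻¹' (V y) := fun y _ =>
        Set.mem_iUnion.mpr ⟨y, hyV y⟩
      obtain ⟨t, ht⟩ := isCompact_univ.elim_finite_subcover _
        (fun y => (htY _).mpr ⟨V y, hVc y, hVu y, rfl⟩) hcover
      have hYsub : localicPart X ⊆ ⋃ y ∈ t, V y := by
        intro z hz
        obtain ⟨y, hyt, hy⟩ := Set.mem_iUnion₂.mp (ht (Set.mem_univ (⟨z, hz⟩ : localicPart X)))
        exact Set.mem_iUnion₂.mpr ⟨y, hyt, hy⟩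
      have hclosed : IsClosed (⋃ y ∈ t, V y) :=
        (t.finite_toSet.isClopen_biUnion fun y _ => hVc y).isClosed
      have hXsub : (Set.univ : Set X) ⊆ ⋃ y ∈ t, V y := by
        rw [← hsp.closure_eq]; exact closure_minimal hYsub hclosed
      obtain ⟨y, -, hy⟩ := Set.mem_iUnion₂.mp (hXsub (Set.mem_univ x))
      exact hxV y hy
    · -- L-regularity
      intro U hUc hUu x hxU
      rw [mem_closure_iff]
      intro O hO hxO
      obtain ⟨Cl, hClc, hxCl, hClsub⟩ :=
        LSaux.exists_clopen_nhd hX (hO.inter hUc.isOpen) ⟨hxO, hxU⟩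
      obtain ⟨y, hyY, hyCl⟩ := hsp.exists_mem_open hClc.isOpen ⟨x, hxCl⟩
      have hyU : (⟨y, hyY⟩ : localicPart X) ∈ ((↑) : localicPart X → X) ⁻¹' U :=
        (hClsub hyCl).2
      have hUopen : IsOpen (((↑) : localicPart X → X) ⁻¹' U) :=
        (htY _).mpr ⟨U, hUc, hUu, rfl⟩
      obtain ⟨s, hsnhds, hsclosed, hssub⟩ :=
        exists_mem_nhds_isClosed_subset (hUopen.mem_nhds hyU)
      obtain ⟨V₀, hV₀c, hV₀u, hV₀e⟩ := (htY (interior s)).mp isOpen_interior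
      have hyV₀ : (⟨y, hyY⟩ : localicPart X) ∈ ((↑) : localicPart X → X) ⁻¹' V₀ := by
        rw [← hV₀e]; exact mem_interior_iff_mem_nhds.mpr hsnhds
      have hclsub : closure (((↑) : localicPart X → X) ⁻¹' V₀) ⊆
          ((↑) : localicPart X → X) ⁻¹' U := by
        rw [← hV₀e]
        calc closure (interior s) ⊆ closure s := closure_mono interior_subset
          _ = s := hsclosed.closure_eq
          _ ⊆ _ := hssub
      have hlow : (lowerClosure V₀ : Set X) ⊆ U := by
        intro z hz
        by_contra hzU
        have hSclopen : IsClopen ((lowerClosure V₀ : Set X) ∩ Uᶜ) :=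
          (hX.esakia V₀ hV₀c).inter hUc.compl
        obtain ⟨y', hy'Y, hy'S⟩ := hsp.exists_mem_open hSclopen.isOpen ⟨z, hz, hzU⟩
        obtain ⟨v, hvV₀, hy'v⟩ := mem_lowerClosure.mp hy'S.1
        have hy'cl : (⟨y', hy'Y⟩ : localicPart X) ∈
            closure (((↑) : localicPart X → X) ⁻¹' V₀) := by
          rw [mem_closure_iff]
          intro o ho hy'o
          obtain ⟨Wc, hWcc, hWcu, rfl⟩ := (htY o).mp ho
          have hvW : v ∈ Wc := hWcu hy'v hy'o
          obtain ⟨y'', hy''Y, hy''⟩ :=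
            hsp.exists_mem_open (hWcc.isOpen.inter hV₀c.isOpen) ⟨v, hvW, hvV₀⟩
          exact ⟨⟨y'', hy''Y⟩, hy''.1, hy''.2⟩
        exact hy'S.2 (hclsub hy'cl)
      exact ⟨y, (hClsub hyCl).1, Set.mem_sUnion.mpr ⟨V₀, ⟨hV₀c, hV₀u, hlow⟩, hyV₀⟩⟩
end
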